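/- arXiv:math/0702891 — 7 statements merged into one kernel-verified Lean document; each statement's English description precedes it below -/
import Mathlib

section
/- Let f ∈ ℝ[x] be a polynomial and let V(f) denote the number of sign changes in the ordered sequence of nonzero coefficients of f (listed from the leading coefficient down). Then V((x+1)·f) ≤ V(f). -/
open Polynomial

/-- The number of sign changes in the ordered sequence of nonzero coefficients of `f`. -/
noncomputable def signChanges (f : Polynomial ℝ) : ℕ :=
  let l := (f.support.sort (· ≤ ·)).map f.coeff
  (l.zip l.tail).countP (fun p => decide (p.1 * p.2 < 0))

/-- `V f` is the number of sign changes, with the convention `V 0 = -2`. -/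
noncomputable def V (f : Polynomial ℝ) : ℤ :=
  if f = 0 then -2 else signChanges f

/-!
The coefficients of `(X + 1) * f` are `c i = a (i - 1) + a i`, where `a` lists those of `f`.
A nonzero `c i` has the sign of `a (i - 1)` or of `a i`, so the nonzero signs of `c` are those
of `a` read along a nondecreasing choice of positions, possibly with repetitions, and such a
reading cannot create sign changes. The induction along the list keeps an arbitrary entry `s`
in front of both sides, which is what lets the statement pass through the inductive step.
-/

theorem mul_neg_iff_of_mul_pos {R : Type*} [CommRing R] [LinearOrder R] [IsStrictOrderedRing R]
    {a b : R} (hab : 0 < a * b) (c : R) : c * a < 0 ↔ c * b < 0 := by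
  constructor <;> intro h
  · nlinarith [mul_neg_of_neg_of_pos h hab, sq_nonneg a]
  · nlinarith [mul_neg_of_neg_of_pos h hab, sq_nonneg b]

namespace List

section

variable {R : Type*} [AddZeroClass R]

def sumWithPrev (p : R) (l : List R) : List R :=
  zipWith (· + ·) (p :: l) (l ++ [0])

@[simp]
theorem sumWithPrev_nil (p : R) : sumWithPrev p [] = [p] := by
  simp [sumWithPrev]

@[simp]
theorem sumWithPrev_cons (p x : R) (l : List R) :
    sumWithPrev p (x :: l) = (p + x) :: sumWithPrev x l := by
  simp [sumWithPrev]

end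

variable {R : Type*} [CommRing R] [LinearOrder R]

def signChanges (l : List R) : ℕ :=
  (l.zip l.tail).countP (fun p => decide (p.1 * p.2 < 0))

@[simp]
theorem signChanges_nil : ([] : List R).signChanges = 0 := rfl

@[simp]
theorem signChanges_singleton (a : R) : [a].signChanges = 0 := rfl

theorem signChanges_cons_cons (a b : R) (l : List R) :
    (a :: b :: l).signChanges = (b :: l).signChanges + if a * b < 0 then 1 else 0 := by
  simp only [signChanges, tail_cons, zip_cons_cons, countP_cons, decide_eq_true_eq]

@[simp]
theorem signChanges_zero_cons (l : List R) : ((0 : R) :: l).signChanges = l.signChanges := by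
  cases l <;> simp [signChanges_cons_cons]

theorem signChanges_cons_cons_of_mul_pos {a b : R} (hab : 0 < a * b) (l : List R) :
    (a :: b :: l).signChanges = (b :: l).signChanges := by
  simp [signChanges_cons_cons, hab.not_gt]

variable [IsStrictOrderedRing R]

theorem signChanges_cons_congr {a b : R} (hab : 0 < a * b) (l : List R) :
    (a :: l).signChanges = (b :: l).signChanges := by
  cases l with
  | nil => rfl
  | cons c l =>
    simp only [signChanges_cons_cons, mul_comm a, mul_comm b, mul_neg_iff_of_mul_pos hab]

theorem signChanges_cons_cons_congr (s : R) {a b : R} (hab : 0 < a * b) (l : List R) :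
    (s :: a :: l).signChanges = (s :: b :: l).signChanges := by
  simp only [signChanges_cons_cons, signChanges_cons_congr hab, mul_neg_iff_of_mul_pos hab]

theorem signChanges_cons_le_cons_cons (a : R) {b : R} (hb : b ≠ 0) (l : List R) :
    (a :: l).signChanges ≤ (a :: b :: l).signChanges := by
  cases l with
  | nil => simp
  | cons c l =>
    have hsplit : a * c < 0 → a * b < 0 ∨ b * c < 0 := by
      intro hac
      by_contra! h
      -- `(a * b) * (b * c) = (a * c) * b ^ 2`
      nlinarith [mul_nonneg h.1 h.2, sq_pos_of_ne_zero hb]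
    simp only [signChanges_cons_cons]
    split_ifs <;> first | omega | simp_all

theorem signChanges_cons_filter_sumWithPrev_le (s p : R) (l : List R) :
    (s :: (sumWithPrev p l).filter (· ≠ 0)).signChanges ≤
      (s :: (p :: l).filter (· ≠ 0)).signChanges := by
  induction l generalizing s p with
  | nil => simp
  | cons x l ih =>
    have hdrop : (s :: (x :: l).filter (· ≠ 0)).signChanges ≤
        (s :: (p :: x :: l).filter (· ≠ 0)).signChanges := by
      rcases eq_or_ne p 0 with rfl | hp
      · simp
      · simpa [hp] using signChanges_cons_le_cons_cons s hp _
    rcases eq_or_ne (p + x) 0 with hpx | hpx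
    · simpa [hpx] using (ih s x).trans hdrop
    have hhead : ∀ t, (s :: t :: (sumWithPrev x l).filter (· ≠ 0)).signChanges ≤
        (s :: t :: (x :: l).filter (· ≠ 0)).signChanges := fun t => by
      rw [signChanges_cons_cons, signChanges_cons_cons]
      exact Nat.add_le_add_right (ih t x) _
    rw [sumWithPrev_cons, filter_cons_of_pos (by simpa using hpx)]
    -- `p + x` has the sign of `x` or of `p`
    rcases lt_or_ge 0 ((p + x) * x) with hx | hx
    · have hx0 : x ≠ 0 := by rintro rfl; simp at hx
      calc (s :: (p + x) :: (sumWithPrev x l).filter (· ≠ 0)).signChanges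
          = (s :: x :: (sumWithPrev x l).filter (· ≠ 0)).signChanges :=
            signChanges_cons_cons_congr s hx _
        _ ≤ (s :: x :: x :: l.filter (· ≠ 0)).signChanges := by simpa [hx0] using hhead x
        _ = (s :: (x :: l).filter (· ≠ 0)).signChanges := by
            rw [filter_cons_of_pos (by simpa using hx0), signChanges_cons_cons s,
              signChanges_cons_cons s, signChanges_cons_cons_of_mul_pos (mul_self_pos.mpr hx0)]
        _ ≤ _ := hdrop
    · have hp : 0 < (p + x) * p := by
        rcases hpx.lt_or_gt with h | h <;> nlinarith
      have hp0 : p ≠ 0 := by rintro rfl; simp at hp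
      calc (s :: (p + x) :: (sumWithPrev x l).filter (· ≠ 0)).signChanges
          = (s :: p :: (sumWithPrev x l).filter (· ≠ 0)).signChanges :=
            signChanges_cons_cons_congr s hp _
        _ ≤ _ := by simpa [hp0] using hhead p

theorem signChanges_filter_sumWithPrev_zero_le (l : List R) :
    ((sumWithPrev 0 l).filter (· ≠ 0)).signChanges ≤ (l.filter (· ≠ 0)).signChanges := by
  simpa using signChanges_cons_filter_sumWithPrev_le 0 0 l

end List

namespace Polynomial

variable {R : Type*} [Semiring R]

theorem map_coeff_sort_support [DecidableEq R] (f : R[X]) {N : ℕ} (hN : f.natDegree < N) :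
    (f.support.sort (· ≤ ·)).map f.coeff = ((List.range N).map f.coeff).filter (· ≠ 0) := by
  have hsupp : f.support = ((List.range N).filter (fun i => f.coeff i ≠ 0)).toFinset := by
    ext i
    simp only [mem_support_iff, List.mem_toFinset, List.mem_filter, List.mem_range,
      decide_eq_true_eq, iff_and_self]
    exact fun hi => (le_natDegree_of_ne_zero hi).trans_lt hN
  rw [hsupp, (List.toFinset_sort _ (List.nodup_range.filter _)).2
    (List.pairwise_le_range.sublist List.filter_sublist), List.filter_map]
  rfl

theorem map_coeff_range_X_add_one_mul (f : R[X]) {N : ℕ} (hN : f.natDegree < N) :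
    (List.range (N + 1)).map ((X + 1) * f).coeff =
      List.sumWithPrev 0 ((List.range N).map f.coeff) := by
  refine List.ext_getElem (by simp [List.sumWithPrev]) fun i hi _ => ?_
  simp only [List.length_map, List.length_range] at hi
  simp only [List.sumWithPrev, List.getElem_map, List.getElem_range, List.getElem_zipWith,
    add_mul, one_mul, coeff_add]
  congr 1
  · rcases i with _ | i
    · simp
    · simp [coeff_X_mul]
  · rcases Nat.lt_or_ge i N with h | h
    · simp [List.getElem_append_left, h]
    · simp [List.getElem_append_right, h, coeff_eq_zero_of_natDegree_lt (hN.trans_le h)]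

end Polynomial

theorem signChanges_eq (f : ℝ[X]) {N : ℕ} (hN : f.natDegree < N) :
    signChanges f = (((List.range N).map f.coeff).filter (· ≠ 0)).signChanges := by
  rw [← map_coeff_sort_support f hN]
  rfl

theorem sign_changes_mul_X_add_one (f : Polynomial ℝ) :
    V ((X + 1) * f) ≤ V f := by
  rcases eq_or_ne f 0 with rfl | hf
  · simp
  have hX : (X + 1 : ℝ[X]).natDegree = 1 := by rw [← C_1, natDegree_X_add_C]
  have hg : (X + 1) * f ≠ 0 := mul_ne_zero (by rw [← C_1]; exact X_add_C_ne_zero 1) hf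
  have hdeg : ((X + 1) * f).natDegree < f.natDegree + 1 + 1 :=
    natDegree_mul_le.trans_lt (by omega)
  simp only [V, if_neg hg, if_neg hf, Nat.cast_le]
  rw [signChanges_eq _ hdeg, map_coeff_range_X_add_one_mul f (Nat.lt_succ_self _),
    signChanges_eq f (Nat.lt_succ_self _)]
  exact List.signChanges_filter_sumWithPrev_zero_le _
end

section
/- Let f, g ∈ ℝ[x] and suppose g has at most t nonzero terms. Then V(f + g) ≤ V(f) + 2t, where V denotes the number of sign changes in the coefficient sequence, with the convention V(0) = -2. -/
open Polynomial

/-!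
Adding a monomial `c xⁿ` to `f` only changes the coefficient at `n`, so the sequence of nonzero
coefficients loses at most one entry and gains at most one. Deleting a nonzero entry never creates
a sign change, and inserting an entry creates at most two. Summing over the at most `t` monomials
of `g` gives the bound; the convention `V 0 = -2` is covered by the fact that a nonzero polynomial
has fewer sign changes than nonzero coefficients.
-/

section SignChangesList

variable {R : Type*} [CommRing R] [LinearOrder R]

def signChangesList (l : List R) : ℕ :=
  (l.zip l.tail).countP (fun p => decide (p.1 * p.2 < 0))

@[simp]
lemma signChangesList_nil : signChangesList ([] : List R) = 0 := rfl

@[simp]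
lemma signChangesList_singleton (x : R) : signChangesList [x] = 0 := rfl

lemma signChangesList_cons_cons (x y : R) (l : List R) :
    signChangesList (x :: y :: l) = signChangesList (y :: l) + if x * y < 0 then 1 else 0 := by
  simp [signChangesList, List.countP_cons]

lemma signChangesList_le_length_sub_one (l : List R) : signChangesList l ≤ l.length - 1 :=
  (List.countP_le_length).trans (by simp)

-- The default value `0` makes the junction term vanish when either list is empty.
lemma signChangesList_append (l₁ l₂ : List R) :
    signChangesList (l₁ ++ l₂) = signChangesList l₁ + signChangesList l₂ +
      if l₁.getLastD 0 * l₂.headD 0 < 0 then 1 else 0 := by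
  suffices ∀ x l₁, signChangesList ((x :: l₁) ++ l₂) = signChangesList (x :: l₁) +
      signChangesList l₂ + if (x :: l₁).getLastD 0 * l₂.headD 0 < 0 then 1 else 0 by
    cases l₁ with
    | nil => simp
    | cons x l₁ => exact this x l₁
  intro x l₁
  induction l₁ generalizing x with
  | nil =>
    cases l₂ with
    | nil => simp
    | cons y l₂ => simp [signChangesList_cons_cons]
  | cons y l₁ ih =>
    simp only [List.cons_append, signChangesList_cons_cons, List.getLastD_cons] at ih ⊢
    rw [ih y]
    omega

lemma mul_neg_or_mul_neg_of_mul_neg [IsStrictOrderedRing R] {x y a : R} (ha : a ≠ 0)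
    (hxy : x * y < 0) : x * a < 0 ∨ a * y < 0 := by
  by_contra! h
  have : 0 ≤ x * a * (a * y) := mul_nonneg h.1 h.2
  have : x * y * (a * a) < 0 := mul_neg_of_neg_of_pos hxy (mul_self_pos.2 ha)
  linarith [show x * a * (a * y) = x * y * (a * a) by ring]

lemma signChangesList_append_cons_le (l₁ l₂ : List R) (a : R) :
    signChangesList (l₁ ++ a :: l₂) ≤ signChangesList (l₁ ++ l₂) + 2 := by
  cases l₂ with
  | nil =>
    rw [List.append_nil, signChangesList_append, signChangesList_singleton]
    split_ifs <;> omega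
  | cons y l₂ =>
    rw [signChangesList_append, signChangesList_append, List.headD_cons,
      signChangesList_cons_cons]
    split_ifs <;> omega

lemma signChangesList_append_le_append_cons [IsStrictOrderedRing R] (l₁ l₂ : List R) {a : R}
    (ha : a ≠ 0) : signChangesList (l₁ ++ l₂) ≤ signChangesList (l₁ ++ a :: l₂) := by
  rw [signChangesList_append, signChangesList_append]
  cases l₂ with
  | nil => simp
  | cons y l₂ =>
    rw [List.headD_cons, signChangesList_cons_cons, List.headD_cons]
    have := fun h : l₁.getLastD 0 * y < 0 => mul_neg_or_mul_neg_of_mul_neg ha h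
    split_ifs <;> tauto

end SignChangesList

lemma Finset.sort_erase {α : Type*} [LinearOrder α] [DecidableEq α] (s : Finset α) (a : α) :
    (s.erase a).sort (· ≤ ·) = (s.sort (· ≤ ·)).erase a :=
  List.Perm.eq_of_pairwise' (Finset.pairwise_sort _ _)
    ((Finset.pairwise_sort _ _).sublist List.erase_sublist)
    (Multiset.coe_eq_coe.1 (by rw [← Multiset.coe_erase, Finset.sort_eq, Finset.sort_eq,
      Finset.erase_val]))

namespace Polynomial

variable {R : Type*} [Semiring R]

def nonzeroCoeffs (p : R[X]) : List R := (p.support.sort (· ≤ ·)).map p.coeff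

lemma length_nonzeroCoeffs (p : R[X]) : (nonzeroCoeffs p).length = p.support.card := by
  simp [nonzeroCoeffs]

lemma nonzeroCoeffs_erase (p : R[X]) (n : ℕ) :
    nonzeroCoeffs (p.erase n) = ((p.support.sort (· ≤ ·)).erase n).map p.coeff := by
  rw [nonzeroCoeffs, support_erase, ← Finset.sort_erase]
  refine List.map_congr_left fun m hm => erase_ne p ?_
  exact (Finset.mem_erase.1 ((Finset.mem_sort _).1 hm)).1

lemma exists_nonzeroCoeffs_eq_append_cons {p : R[X]} {n : ℕ} (hn : n ∈ p.support) :
    ∃ l₁ l₂, nonzeroCoeffs p = l₁ ++ p.coeff n :: l₂ ∧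
      nonzeroCoeffs (p.erase n) = l₁ ++ l₂ := by
  obtain ⟨l₁, l₂, -, hsplit, herase⟩ :=
    List.exists_erase_eq ((Finset.mem_sort (· ≤ ·)).2 hn)
  refine ⟨l₁.map p.coeff, l₂.map p.coeff, ?_, ?_⟩
  · rw [nonzeroCoeffs, hsplit, List.map_append, List.map_cons]
  · rw [nonzeroCoeffs_erase, herase, List.map_append]

lemma erase_eq_self_of_notMem_support {p : R[X]} {n : ℕ} (hn : n ∉ p.support) :
    p.erase n = p := by
  ext m
  rw [coeff_erase]
  split_ifs with h
  · subst h; exact (notMem_support_iff.1 hn).symm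
  · rfl

lemma erase_add_monomial (p : R[X]) (n : ℕ) (c : R) :
    (p + monomial n c).erase n = p.erase n := by
  ext m
  simp only [coeff_erase, coeff_add, coeff_monomial]
  split_ifs <;> simp_all

end Polynomial

lemma signChanges_eq_signChangesList (p : ℝ[X]) :
    signChanges p = signChangesList (nonzeroCoeffs p) := rfl

lemma signChanges_lt_card_support {p : ℝ[X]} (hp : p ≠ 0) : signChanges p < p.support.card := by
  have := signChangesList_le_length_sub_one (nonzeroCoeffs p)
  rw [length_nonzeroCoeffs] at this
  have := Finset.card_pos.2 (support_nonempty.2 hp)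
  rw [signChanges_eq_signChangesList]
  omega

lemma signChanges_erase_le (p : ℝ[X]) (n : ℕ) : signChanges (p.erase n) ≤ signChanges p := by
  by_cases hn : n ∈ p.support
  · obtain ⟨l₁, l₂, hp, hpn⟩ := exists_nonzeroCoeffs_eq_append_cons hn
    rw [signChanges_eq_signChangesList, signChanges_eq_signChangesList, hp, hpn]
    exact signChangesList_append_le_append_cons l₁ l₂ (mem_support_iff.1 hn)
  · rw [erase_eq_self_of_notMem_support hn]

lemma signChanges_le_erase_add_two (p : ℝ[X]) (n : ℕ) :
    signChanges p ≤ signChanges (p.erase n) + 2 := by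
  by_cases hn : n ∈ p.support
  · obtain ⟨l₁, l₂, hp, hpn⟩ := exists_nonzeroCoeffs_eq_append_cons hn
    rw [signChanges_eq_signChangesList, signChanges_eq_signChangesList, hp, hpn]
    exact signChangesList_append_cons_le l₁ l₂ _
  · rw [erase_eq_self_of_notMem_support hn]
    omega

lemma signChanges_add_monomial_le (f : ℝ[X]) (n : ℕ) (c : ℝ) :
    signChanges (f + monomial n c) ≤ signChanges f + 2 :=
  calc signChanges (f + monomial n c)
      ≤ signChanges ((f + monomial n c).erase n) + 2 := signChanges_le_erase_add_two _ n
    _ = signChanges (f.erase n) + 2 := by rw [erase_add_monomial]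
    _ ≤ signChanges f + 2 := by grw [signChanges_erase_le]

lemma signChanges_add_sum_monomial_le (f : ℝ[X]) (s : Finset ℕ) (c : ℕ → ℝ) :
    signChanges (f + ∑ n ∈ s, monomial n (c n)) ≤ signChanges f + 2 * s.card := by
  induction s using Finset.induction_on with
  | empty => simp
  | insert a s ha ih =>
    rw [Finset.sum_insert ha, Finset.card_insert_of_notMem ha, add_comm (monomial a (c a)),
      ← add_assoc]
    grw [signChanges_add_monomial_le, ih]
    omega

lemma signChanges_add_le (f g : ℝ[X]) :
    signChanges (f + g) ≤ signChanges f + 2 * g.support.card := by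
  conv_lhs => rw [g.as_sum_support]
  exact signChanges_add_sum_monomial_le f _ _

lemma neg_two_le_V (f : ℝ[X]) : -2 ≤ V f := by
  unfold V
  split_ifs <;> omega

theorem V_add_le (f g : Polynomial ℝ) (t : ℕ) (hg : g.support.card ≤ t) :
    V (f + g) ≤ V f + 2 * t := by
  rcases eq_or_ne (f + g) 0 with hfg | hfg
  · rw [hfg, V, if_pos rfl]
    linarith [neg_two_le_V f]
  rcases eq_or_ne f 0 with rfl | hf
  · rw [zero_add] at hfg ⊢
    have := signChanges_lt_card_support hfg
    rw [V, V, if_neg hfg, if_pos rfl]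
    omega
  · have := signChanges_add_le f g
    rw [V, V, if_neg hfg, if_neg hf]
    omega
end

section
/- Let f ∈ ℝ[x,y] be a polynomial with at most t nonzero terms. Then the univariate polynomial f(x, x+1) ∈ ℝ[x] has at most 2t-2 sign changes in its coefficient sequence, i.e., V(f(x, x+1)) ≤ 2t-2. -/
/-!
Write `f(x, x + 1) = ∑ cᵢ xᵃⁱ (x + 1)ᵇⁱ`. Having `V` sign changes means having a strictly
alternating subsequence of `V + 1` coefficients, so it suffices to bound the length of such
subsequences by `2t - 1`. Induct on `t`: factor out `(x + 1)ᵐ` with `m = min bᵢ`. Multiplying by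
`x + 1` never creates sign changes, since each coefficient `hₖ₋₁ + hₖ` of `(x + 1) h` shares its sign
with `hₖ₋₁` or `hₖ`. What remains is a monomial `c xᵃ` plus `t - 1` terms, and changing a single
coefficient adds at most two sign changes. A single term `c xᵃ (x + 1)ᵇ` has none.
-/

open Polynomial

namespace List

theorem IsChain.append_drop_one_of_append_cons {α : Type*} {R : α → α → Prop}
    (hR : ∀ {x p y z}, R x p → R p y → R y z → R x z) {u v : List α} {p : α}
    (h : IsChain R (u ++ p :: v)) : IsChain R (u ++ v.drop 1) := by
  obtain ⟨hu, hpv, hup⟩ := isChain_append.1 h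
  cases v with
  | nil => simpa using hu
  | cons y w =>
    refine hu.append (hpv.drop 2) fun x hx z hz => ?_
    obtain ⟨w, rfl⟩ : ∃ w', w = z :: w' := by
      cases w <;> simp_all
    simp only [isChain_cons_cons] at hpv
    exact hR (hup x hx p rfl) hpv.1 hpv.2.1

noncomputable def signChangeCount (l : List ℝ) : ℕ :=
  (l.zip l.tail).countP fun p => decide (p.1 * p.2 < 0)

theorem signChangeCount_cons_cons (a b : ℝ) (l : List ℝ) :
    (a :: b :: l).signChangeCount = (b :: l).signChangeCount + if a * b < 0 then 1 else 0 := by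
  simp [signChangeCount, countP_cons]

end List

namespace Polynomial

section AlternatingCoefficients

variable {R : Type*} [CommRing R] [LinearOrder R]

def CoeffsAlternateOn (g : R[X]) (l : List ℕ) : Prop :=
  l.IsChain fun i j => i < j ∧ g.coeff i * g.coeff j < 0

theorem CoeffsAlternateOn.congr {g h : R[X]} {l : List ℕ} (hl : CoeffsAlternateOn g l)
    (hgh : ∀ i ∈ l, g.coeff i = h.coeff i) : CoeffsAlternateOn h l :=
  hl.imp_of_mem_imp fun i j hi hj => by rw [hgh i hi, hgh j hj]; exact id

variable [IsStrictOrderedRing R]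

theorem coeff_X_pow_mul_X_add_one_pow_nonneg (a b n : ℕ) :
    0 ≤ (X ^ a * (X + 1) ^ b : R[X]).coeff n := by
  rw [coeff_X_pow_mul', coeff_X_add_one_pow]
  split_ifs <;> positivity

theorem CoeffsAlternateOn.length_le_one_of_coeff_nonneg {h : R[X]} (hh : ∀ n, 0 ≤ h.coeff n)
    (c : R) {l : List ℕ} (hl : CoeffsAlternateOn (C c * h) l) : l.length ≤ 1 := by
  match l, hl with
  | [], _ | [_], _ => simp
  | i :: j :: _, hl =>
    have hij := (List.isChain_cons_cons.1 hl).1.2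
    simp only [coeff_C_mul] at hij
    nlinarith [mul_nonneg (hh i) (hh j), mul_self_nonneg c]

theorem exists_coeff_mul_coeff_X_add_one_mul_pos (h : R[X]) (k : ℕ) :
    ∃ m ≤ k, k ≤ m + 1 ∧
      (((X + 1) * h).coeff k ≠ 0 → 0 < h.coeff m * ((X + 1) * h).coeff k) := by
  cases k with
  | zero => exact ⟨0, le_rfl, by omega, fun hk => by simpa [mul_self_pos] using hk⟩
  | succ n =>
    rw [add_mul, one_mul, coeff_add, coeff_X_mul]
    by_cases hpos : 0 < h.coeff (n + 1) * (h.coeff n + h.coeff (n + 1))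
    · exact ⟨n + 1, le_rfl, by omega, fun _ => hpos⟩
    · exact ⟨n, by omega, le_rfl, fun hk => by nlinarith [mul_self_pos.2 hk]⟩

theorem CoeffsAlternateOn.exists_of_X_add_one_mul {h : R[X]} {l : List ℕ}
    (hl : CoeffsAlternateOn ((X + 1) * h) l) :
    ∃ l', CoeffsAlternateOn h l' ∧ l'.length = l.length := by
  choose w hwle hlew hw using exists_coeff_mul_coeff_X_add_one_mul_pos h
  refine ⟨l.map w, (List.isChain_map w).2 (hl.imp fun i j ⟨hij, hneg⟩ => ?_), l.length_map w⟩
  have hi := hw i (left_ne_zero_of_mul hneg.ne)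
  have hj := hw j (right_ne_zero_of_mul hneg.ne)
  have hwij : h.coeff (w i) * h.coeff (w j) < 0 := by
    nlinarith [mul_pos hi hj]
  refine ⟨lt_of_le_of_ne (by grind) fun he => ?_, hwij⟩
  rw [he] at hwij
  exact (mul_self_nonneg _).not_gt hwij

theorem CoeffsAlternateOn.exists_of_X_add_one_pow_mul (n : ℕ) {h : R[X]} {l : List ℕ}
    (hl : CoeffsAlternateOn ((X + 1) ^ n * h) l) :
    ∃ l', CoeffsAlternateOn h l' ∧ l'.length = l.length := by
  induction n generalizing h with
  | zero => exact ⟨l, by simpa using hl, rfl⟩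
  | succ n ih =>
    rw [pow_succ, mul_assoc] at hl
    obtain ⟨l₁, hl₁, hlen₁⟩ := ih hl
    obtain ⟨l₂, hl₂, hlen₂⟩ := hl₁.exists_of_X_add_one_mul
    exact ⟨l₂, hl₂, hlen₂.trans hlen₁⟩

theorem CoeffsAlternateOn.exists_of_coeff_eq_of_ne {g h : R[X]} {p : ℕ}
    (hgh : ∀ i ≠ p, g.coeff i = h.coeff i) {l : List ℕ} (hl : CoeffsAlternateOn g l) :
    ∃ l', CoeffsAlternateOn h l' ∧ l.length ≤ l'.length + 2 := by
  by_cases hp : p ∈ l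
  · obtain ⟨u, v, rfl⟩ := List.append_of_mem hp
    have hnodup : (u ++ p :: v).Nodup :=
      (List.isChain_iff_pairwise.1 (hl.imp fun _ _ h => h.1)).nodup
    refine ⟨u ++ v.drop 1, CoeffsAlternateOn.congr ?_ fun i hi => hgh i ?_, ?_⟩
    · refine List.IsChain.append_drop_one_of_append_cons ?_ hl
      rintro x q y z ⟨hxq, hxq'⟩ ⟨hqy, hqy'⟩ ⟨hyz, hyz'⟩
      refine ⟨by omega, ?_⟩
      nlinarith [mul_pos_of_neg_of_neg hxq' hqy', mul_self_nonneg (g.coeff q),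
        mul_self_nonneg (g.coeff y)]
    · rintro rfl
      simp only [List.nodup_append, List.nodup_cons] at hnodup
      obtain ⟨-, ⟨hpv, -⟩, hup⟩ := hnodup
      rcases List.mem_append.1 hi with hiu | hiv
      · exact hup i hiu i List.mem_cons_self rfl
      · exact hpv (List.mem_of_mem_drop hiv)
    · simp only [List.length_append, List.length_cons, List.length_drop]
      omega
  · exact ⟨l, hl.congr fun i hi => hgh i (ne_of_mem_of_not_mem hi hp), by omega⟩

theorem CoeffsAlternateOn.length_lt_two_mul_card {ι : Type*} {s : Finset ι} (hs : s.Nonempty)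
    (c : ι → R) (a b : ι → ℕ) {l : List ℕ}
    (hl : CoeffsAlternateOn (∑ i ∈ s, C (c i) * X ^ a i * (X + 1) ^ b i) l) :
    l.length < 2 * s.card := by
  classical
  induction s using Finset.strongInduction generalizing b l with
  | H s ih =>
  obtain ⟨i₀, hi₀, hmin⟩ := s.exists_min_image b hs
  by_cases hrest : (s.erase i₀).Nonempty
  · set g := ∑ i ∈ s.erase i₀, C (c i) * X ^ a i * (X + 1) ^ (b i - b i₀)
    have hfactor : ∑ i ∈ s, C (c i) * X ^ a i * (X + 1) ^ b i =
        (X + 1) ^ b i₀ * (g + C (c i₀) * X ^ a i₀) := by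
      rw [← s.sum_erase_add _ hi₀, mul_add, Finset.mul_sum]
      congr 1
      · refine Finset.sum_congr rfl fun i hi => ?_
        rw [← pow_mul_pow_sub (X + 1 : R[X]) (hmin i (Finset.mem_of_mem_erase hi))]
        ring
      · ring
    rw [hfactor] at hl
    obtain ⟨l₁, hl₁, hlen₁⟩ := hl.exists_of_X_add_one_pow_mul
    obtain ⟨l₂, hl₂, hlen₂⟩ := hl₁.exists_of_coeff_eq_of_ne (p := a i₀) (h := g)
      fun i hi => by simp [hi]
    have hlt := ih _ (s.erase_ssubset hi₀) hrest _ hl₂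
    have hcard := Finset.card_erase_add_one hi₀
    omega
  · obtain rfl : s = {i₀} := by
      simpa [Finset.not_nonempty_iff_eq_empty, Finset.erase_eq_empty_iff, hs.ne_empty] using hrest
    rw [Finset.sum_singleton, mul_assoc] at hl
    have hle := hl.length_le_one_of_coeff_nonneg (coeff_X_pow_mul_X_add_one_pow_nonneg _ _)
    rw [Finset.card_singleton]
    omega

end AlternatingCoefficients

theorem exists_coeffsAlternateOn_cons (g : ℝ[X]) (L : List ℕ) (x : ℕ)
    (hL : (x :: L).IsChain (· < ·)) (hnz : ∀ i ∈ x :: L, g.coeff i ≠ 0) :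
    ∃ t, CoeffsAlternateOn g (x :: t) ∧ t.length = ((x :: L).map g.coeff).signChangeCount := by
  induction L generalizing x with
  | nil => exact ⟨[], List.isChain_singleton x, rfl⟩
  | cons y L ih =>
    obtain ⟨hxy, hyL⟩ := List.isChain_cons_cons.1 hL
    obtain ⟨t, ht, hlen⟩ := ih y hyL fun i hi => hnz i (List.mem_cons_of_mem x hi)
    simp only [List.map_cons, List.signChangeCount_cons_cons] at hlen ⊢
    by_cases hs : g.coeff x * g.coeff y < 0
    · exact ⟨y :: t, List.isChain_cons_cons.2 ⟨⟨hxy, hs⟩, ht⟩, by simp [hs, hlen]⟩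
    · have hpos : 0 < g.coeff x * g.coeff y :=
        lt_of_le_of_ne (not_lt.1 hs) (mul_ne_zero (hnz x (by simp)) (hnz y (by simp))).symm
      refine ⟨t, ht.imp_head fun ⟨hyz, hneg⟩ => ⟨hxy.trans hyz, ?_⟩, by simp [hs, hlen]⟩
      nlinarith [mul_neg_of_pos_of_neg hpos hneg, mul_self_nonneg (g.coeff y)]

theorem exists_coeffsAlternateOn_length_eq_signChanges_add_one {g : ℝ[X]} (hg : g ≠ 0) :
    ∃ l, CoeffsAlternateOn g l ∧ l.length = signChanges g + 1 := by
  obtain ⟨x, L, hL⟩ := List.exists_cons_of_ne_nil (l := g.support.sort (· ≤ ·))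
    (List.ne_nil_of_length_pos (by simpa [Finset.length_sort] using hg))
  have hsorted : (x :: L).IsChain (· < ·) := hL ▸ g.support.sortedLT_sort.isChain
  have hnz : ∀ i ∈ x :: L, g.coeff i ≠ 0 := fun i hi => by
    rw [← hL, Finset.mem_sort] at hi
    exact mem_support_iff.1 hi
  obtain ⟨t, ht, hlen⟩ := exists_coeffsAlternateOn_cons g L x hsorted hnz
  refine ⟨x :: t, ht, ?_⟩
  rw [List.length_cons, hlen]
  simp only [signChanges, hL]
  rfl

end Polynomial

theorem aeval_X_X_add_one_eq_sum {R : Type*} [CommSemiring R] (f : MvPolynomial (Fin 2) R) :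
    MvPolynomial.aeval ![X, X + 1] f =
      ∑ d ∈ f.support, C (f.coeff d) * X ^ d 0 * (X + 1) ^ d 1 := by
  rw [MvPolynomial.aeval_def, MvPolynomial.eval₂_eq']
  simp [Fin.prod_univ_two, mul_assoc]

theorem V_subst_X_add_one_le (f : MvPolynomial (Fin 2) ℝ) (t : ℕ)
    (ht : f.support.card ≤ t) :
    V (MvPolynomial.aeval ![X, X + 1] f) ≤ 2 * t - 2 := by
  rw [V]
  split_ifs with hg
  · omega
  obtain ⟨l, hl, hlen⟩ := exists_coeffsAlternateOn_length_eq_signChanges_add_one hg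
  have hf : f.support.Nonempty := MvPolynomial.support_nonempty.2 (by rintro rfl; simp at hg)
  rw [aeval_X_X_add_one_eq_sum] at hl
  have hlt := hl.length_lt_two_mul_card hf
  omega
end

section
/- Let f ∈ ℝ[x,y] be a polynomial with at most t nonzero terms and let a, b ∈ ℝ. Set g(x) = f(x, a·x + b). Then either g is identically zero, or g has at most 6t-4 real roots, counted with multiplicities except that the possible roots 0 and -b/a are each counted at most once. -/
/-!
Write `g = ∑ cᵢ x ^ αᵢ (a x + b) ^ βᵢ`. If `a b ≠ 0`, the substitution `x = ρ w` with `ρ = -b / a`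
turns `g` into `∑ cᵢ' w ^ αᵢ (w - 1) ^ βᵢ`. The maps `w ↦ -w`, `w ↦ w - 1` and `w ↦ w / (1 - w)`
send the intervals `(-∞, 0)`, `(1, ∞)` and `(0, 1)` onto `(0, ∞)`, and each turns the polynomial
(after clearing the denominator `(1 + X) ^ N` in the last case) into a sum of `t` terms
`c X ^ α (1 + X) ^ β`. The coefficients of such a sum change sign at most `2t - 2` times:
multiplying by `1 + X` creates no sign change and altering one coefficient destroys at most two, so
one can peel off the term of least `β` after factoring out the common power of `1 + X`. Descartes'
rule of signs then bounds the roots in each interval by `2t - 2`, and `0`, `ρ` contribute one each.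
If `a b = 0`, `g` is a sparse polynomial in `x` and only the two half-lines remain.
-/

open Polynomial Finset

theorem Multiset.countP_le_countP_add_countP {α : Type*} {p q r : α → Prop} [DecidablePred p]
    [DecidablePred q] [DecidablePred r] (h : ∀ x, p x → q x ∨ r x) (s : Multiset α) :
    s.countP p ≤ s.countP q + s.countP r := by
  induction s using Multiset.induction_on with
  | empty => simp
  | cons x s ih =>
    simp only [Multiset.countP_cons]
    have := h x
    split_ifs <;> simp_all <;> omega

theorem sign_eq_neg_sign_iff_mul_neg {R : Type*} [Ring R] [LinearOrder R] [IsStrictOrderedRing R]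
    {x y : R} (hx : x ≠ 0) (hy : y ≠ 0) : SignType.sign x = -SignType.sign y ↔ x * y < 0 := by
  rcases hx.lt_or_gt with hx | hx <;> rcases hy.lt_or_gt with hy | hy <;>
    simp [hx, hy, mul_pos_of_neg_of_neg, mul_neg_of_neg_of_pos, mul_neg_of_pos_of_neg, le_of_lt]

namespace Polynomial

section SignChanges

variable {R : Type*} [CommRing R] [LinearOrder R]

def HasSignChanges (P : R[X]) (k : ℕ) : Prop :=
  ∃ n : ℕ → ℕ, ∀ i < k, n i < n (i + 1) ∧ P.coeff (n i) * P.coeff (n (i + 1)) < 0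

theorem HasSignChanges.eq_zero {P : R[X]} {k : ℕ} (h : P.HasSignChanges k)
    (hP : ∀ m l, 0 ≤ P.coeff m * P.coeff l) : k = 0 := by
  obtain ⟨n, hn⟩ := h
  by_contra hk
  exact (hn 0 (Nat.pos_of_ne_zero hk)).2.not_ge (hP _ _)

variable [IsStrictOrderedRing R]

theorem signVariations_eraseLead_cases {P : R[X]} (hE : P.eraseLead ≠ 0) :
    P.leadingCoeff * P.eraseLead.leadingCoeff < 0 ∧
        P.signVariations = P.eraseLead.signVariations + 1 ∨
      0 < P.leadingCoeff * P.eraseLead.leadingCoeff ∧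
        P.signVariations = P.eraseLead.signVariations := by
  have hP : P ≠ 0 := fun h => hE (by simp [h])
  have hlcP : P.leadingCoeff ≠ 0 := leadingCoeff_ne_zero.mpr hP
  have hlcE : P.eraseLead.leadingCoeff ≠ 0 := leadingCoeff_ne_zero.mpr hE
  rw [signVariations_eq_eraseLead_add_ite hP]
  simp_rw [sign_eq_neg_sign_iff_mul_neg hlcP hlcE]
  by_cases hneg : P.leadingCoeff * P.eraseLead.leadingCoeff < 0
  · exact Or.inl ⟨hneg, by simp [hneg]⟩
  · exact Or.inr ⟨(not_lt.mp hneg).lt_of_ne (mul_ne_zero hlcP hlcE).symm, by simp [hneg]⟩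

/-- The chain ends at the leading coefficient, so that it can be prolonged by induction along
`eraseLead`. -/
theorem exists_signChanges_signVariations {P : R[X]} (hP : P ≠ 0) :
    ∃ n : ℕ → ℕ, n P.signVariations = P.natDegree ∧
      ∀ i < P.signVariations, n i < n (i + 1) ∧ P.coeff (n i) * P.coeff (n (i + 1)) < 0 := by
  induction hd : P.natDegree using Nat.strong_induction_on generalizing P with | _ d ih => ?_
  subst hd
  by_cases hE : P.eraseLead = 0
  · have hzero : P.signVariations = 0 := by
      simpa [hE, sign_eq_zero_iff, hP] using signVariations_eq_eraseLead_add_ite hP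
    exact ⟨fun _ => P.natDegree, by simp [hzero]⟩
  have hdeg : P.eraseLead.natDegree < P.natDegree :=
    P.eraseLead_natDegree_lt_or_eraseLead_eq_zero.resolve_right hE
  obtain ⟨n, hnk, hn⟩ := ih _ hdeg hE rfl
  set k := P.eraseLead.signVariations
  have hcoeff : ∀ i ≤ k, P.coeff (n i) = P.eraseLead.coeff (n i) := by
    intro i hi
    refine (eraseLead_coeff_of_ne _ (ne_of_lt (lt_of_le_of_lt ?_ hdeg))).symm
    rcases hi.lt_or_eq with hi | rfl
    · exact le_natDegree_of_ne_zero (left_ne_zero_of_mul (hn i hi).2.ne)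
    · exact hnk.le
  have hlast : P.eraseLead.coeff (n k) = P.eraseLead.leadingCoeff := by rw [hnk, leadingCoeff]
  have hsvk : P.signVariations ≤ k + 1 := by
    rcases signVariations_eraseLead_cases hE with h | h <;> omega
  -- append the leading exponent of `P` to the chain, or let it replace the last index when the
  -- two leading coefficients have the same sign
  refine ⟨Function.update n P.signVariations P.natDegree, by simp, fun i hi => ?_⟩
  rw [Function.update_of_ne hi.ne, hcoeff i (by omega)]
  rcases (show i + 1 ≤ P.signVariations from hi).lt_or_eq with hi' | hi'
  · rw [Function.update_of_ne hi'.ne, hcoeff (i + 1) (by omega)]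
    exact hn i (by omega)
  rw [hi', Function.update_self, coeff_natDegree]
  rcases signVariations_eraseLead_cases hE with ⟨hneg, hsv⟩ | ⟨hpos, hsv⟩
  · obtain rfl : i = k := by omega
    rw [hlast, hnk, mul_comm]
    exact ⟨hdeg, hneg⟩
  · obtain ⟨hlt, hneg⟩ := hn i (by omega)
    rw [show i + 1 = k by omega, hnk] at hlt
    rw [show i + 1 = k by omega, hlast] at hneg
    exact ⟨hlt.trans hdeg, by nlinarith [sq_nonneg P.eraseLead.leadingCoeff]⟩

theorem hasSignChanges_signVariations (P : R[X]) : P.HasSignChanges P.signVariations := by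
  rcases eq_or_ne P 0 with rfl | hP
  · exact ⟨id, by simp⟩
  · obtain ⟨n, -, hn⟩ := exists_signChanges_signVariations hP
    exact ⟨n, hn⟩

theorem HasSignChanges.eq_zero_of_C_mul_X_pow {c : R} {a k : ℕ}
    (h : (C c * X ^ a).HasSignChanges k) : k = 0 :=
  h.eq_zero fun m l => by
    simp only [coeff_C_mul_X_pow]
    split_ifs <;> simp [mul_self_nonneg]

theorem HasSignChanges.of_one_add_X_mul {Q : R[X]} {k : ℕ} (h : ((1 + X) * Q).HasSignChanges k) :
    Q.HasSignChanges k := by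
  obtain ⟨n, hn⟩ := h
  have hw : ∀ m, ∃ w, ((1 + X) * Q).coeff m ≠ 0 →
      w ≤ m ∧ m ≤ w + 1 ∧ 0 < Q.coeff w * ((1 + X) * Q).coeff m := by
    rintro (_ | m)
    · exact ⟨0, fun h => by simpa [add_mul, mul_self_pos] using h⟩
    · have hcoeff : ((1 + X) * Q).coeff (m + 1) = Q.coeff (m + 1) + Q.coeff m := by
        simp [add_mul, coeff_X_mul]
      by_cases hpos : 0 < Q.coeff (m + 1) * ((1 + X) * Q).coeff (m + 1)
      · exact ⟨m + 1, fun _ => ⟨le_rfl, by omega, hpos⟩⟩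
      · refine ⟨m, fun h0 => ⟨by omega, le_rfl, ?_⟩⟩
        have := mul_self_pos.mpr h0
        rw [hcoeff] at this hpos ⊢
        nlinarith
  choose w hw using hw
  refine ⟨fun i => w (n i), fun i hi => ?_⟩
  obtain ⟨hlt, hneg⟩ := hn i hi
  obtain ⟨hle, -, hpos⟩ := hw (n i) (left_ne_zero_of_mul hneg.ne)
  obtain ⟨-, hle', hpos'⟩ := hw (n (i + 1)) (right_ne_zero_of_mul hneg.ne)
  have hsign : Q.coeff (w (n i)) * Q.coeff (w (n (i + 1))) < 0 := by
    nlinarith [sq_nonneg (((1 + X) * Q).coeff (n i) * ((1 + X) * Q).coeff (n (i + 1)))]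
  have hne : w (n i) ≠ w (n (i + 1)) := fun heq => by
    rw [heq] at hsign
    exact (mul_self_nonneg _).not_gt hsign
  exact ⟨lt_of_le_of_ne (show w (n i) ≤ w (n (i + 1)) by omega) hne, hsign⟩

theorem HasSignChanges.of_one_add_X_pow_mul {Q : R[X]} {k : ℕ} (m : ℕ)
    (h : ((1 + X) ^ m * Q).HasSignChanges k) : Q.HasSignChanges k := by
  induction m with
  | zero => simpa using h
  | succ m ih => exact ih (by rw [pow_succ', mul_assoc] at h; exact h.of_one_add_X_mul)

/-- Drop the two consecutive indices `d, d + 1` of the chain that contain the altered exponent;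
the signs on either side of the gap still alternate. -/
theorem HasSignChanges.of_coeff_eq {P Q : R[X]} {k j : ℕ} (h : P.HasSignChanges k)
    (hPQ : ∀ m ≠ j, P.coeff m = Q.coeff m) : Q.HasSignChanges (k - 2) := by
  obtain ⟨n, hn⟩ := h
  by_cases hj : ∃ i₀ ≤ k, n i₀ = j
  swap
  · push Not at hj
    refine ⟨n, fun i hi => ?_⟩
    rw [← hPQ _ (hj i (by omega)), ← hPQ _ (hj (i + 1) (by omega))]
    exact hn i (by omega)
  obtain ⟨i₀, hi₀, rfl⟩ := hj
  have hmono : StrictMonoOn n (Set.Iic k) := strictMonoOn_Iic_of_lt_succ fun i hi => (hn i hi).1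
  set d := min i₀ (k - 1)
  have hkeep : ∀ p ≤ k, p ≠ d → p ≠ d + 1 → P.coeff (n p) = Q.coeff (n p) := by
    refine fun p hp hd hd' => hPQ _ fun heq => ?_
    have := hmono.injOn (Set.mem_Iic.mpr hp) (Set.mem_Iic.mpr hi₀) heq
    omega
  refine ⟨fun i => if i < d then n i else n (i + 2), fun i hi => ?_⟩
  rcases lt_trichotomy (i + 1) d with hi' | hi' | hi'
  · simp only [if_pos hi', if_pos (show i < d by omega)]
    rw [← hkeep i (by omega) (by omega) (by omega),
      ← hkeep (i + 1) (by omega) (by omega) (by omega)]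
    exact hn i (by omega)
  · simp only [if_pos (show i < d by omega), if_neg (show ¬ i + 1 < d by omega)]
    rw [← hkeep i (by omega) (by omega) (by omega),
      ← hkeep (i + 1 + 2) (by omega) (by omega) (by omega)]
    obtain ⟨h₁, s₁⟩ := hn i (by omega)
    obtain ⟨h₂, s₂⟩ : n (i + 1) < n (i + 2) ∧ P.coeff (n (i + 1)) * P.coeff (n (i + 2)) < 0 :=
      hn (i + 1) (by omega)
    obtain ⟨h₃, s₃⟩ : n (i + 2) < n (i + 3) ∧ P.coeff (n (i + 2)) * P.coeff (n (i + 3)) < 0 :=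
      hn (i + 2) (by omega)
    rw [show i + 1 + 2 = i + 3 by omega]
    refine ⟨by omega, ?_⟩
    nlinarith [sq_nonneg (P.coeff (n (i + 1))), sq_nonneg (P.coeff (n (i + 2))),
      mul_self_nonneg (P.coeff (n (i + 1)) * P.coeff (n (i + 2)))]
  · simp only [if_neg (show ¬ i < d by omega), if_neg (show ¬ i + 1 < d by omega)]
    rw [← hkeep (i + 2) (by omega) (by omega) (by omega),
      ← hkeep (i + 1 + 2) (by omega) (by omega) (by omega)]
    exact hn (i + 2) (by omega)

theorem HasSignChanges.le_two_mul_card_sub_two {ι : Type*} {s : Finset ι} {c : ι → R}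
    {α β : ι → ℕ} {k : ℕ} (h : (∑ i ∈ s, C (c i) * X ^ α i * (1 + X) ^ β i).HasSignChanges k) :
    k ≤ 2 * #s - 2 := by
  classical
  induction s using Finset.strongInduction generalizing β k with | H s ih => ?_
  rcases s.eq_empty_or_nonempty with rfl | hs
  · rw [Finset.sum_empty] at h
    simpa using h.eq_zero fun _ _ => by simp
  obtain ⟨i₀, hi₀, hmin⟩ := s.exists_min_image β hs
  have hfactor : ∑ i ∈ s, C (c i) * X ^ α i * (1 + X) ^ β i = (1 + X) ^ β i₀ *
      (C (c i₀) * X ^ α i₀ + ∑ i ∈ s.erase i₀, C (c i) * X ^ α i * (1 + X) ^ (β i - β i₀)) := by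
    rw [← Finset.add_sum_erase s _ hi₀, mul_add, Finset.mul_sum]
    congr 1
    · ring
    · refine Finset.sum_congr rfl fun i hi => ?_
      rw [← Nat.add_sub_cancel' (hmin i (Finset.mem_of_mem_erase hi)), pow_add]
      simp only [Nat.add_sub_cancel_left]
      ring
  rw [hfactor] at h
  replace h := h.of_one_add_X_pow_mul
  rcases (s.erase i₀).eq_empty_or_nonempty with he | he
  · rw [he, Finset.sum_empty, add_zero] at h
    simp [h.eq_zero_of_C_mul_X_pow]
  have hrest := ih _ (Finset.erase_ssubset hi₀) (β := fun i => β i - β i₀)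
    (h.of_coeff_eq (j := α i₀) fun m hm => by simp [hm])
  have hcard := Finset.card_erase_add_one hi₀
  have := he.card_pos
  omega

theorem countP_roots_pos_le {ι : Type*} (s : Finset ι) (c : ι → R) (α β : ι → ℕ) :
    (∑ i ∈ s, C (c i) * X ^ α i * (1 + X) ^ β i).roots.countP (0 < ·) ≤ 2 * #s - 2 :=
  (roots_countP_pos_le_signVariations _).trans
    (hasSignChanges_signVariations _).le_two_mul_card_sub_two

end SignChanges

theorem countP_roots_comp_C_mul_X_add_C {R : Type*} [CommRing R] [IsDomain R] (p : R[X]) {e : R}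
    (he : IsUnit e) (d : R) {S T : R → Prop} [DecidablePred S] [DecidablePred T]
    (hST : ∀ w, S (e * w + d) ↔ T w) :
    p.roots.countP S = (p.comp (C e * X + C d)).roots.countP T := by
  rw [← map_roots_comp_C_mul_X_add_C p e d he, Multiset.countP_map,
    Multiset.countP_eq_card_filter]
  simp only [hST]

theorem sum_ite_rootMultiplicity_le {R : Type*} [CommRing R] [IsDomain R] [DecidableEq R]
    (p : R[X]) (P Q : R → Prop) [DecidablePred P] [DecidablePred Q] (E : Finset R)
    (hE : ∀ x, P x → x ∈ E) (hQ : ∀ x, ¬ P x → Q x) :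
    ∑ x ∈ p.roots.toFinset, (if P x then 1 else (p.rootMultiplicity x : ℤ)) ≤
      #E + p.roots.countP Q := by
  calc ∑ x ∈ p.roots.toFinset, (if P x then 1 else (p.rootMultiplicity x : ℤ))
      ≤ ∑ x ∈ p.roots.toFinset, ((if x ∈ E then 1 else 0) + ((p.roots.filter Q).count x : ℤ)) := by
        refine Finset.sum_le_sum fun x _ => ?_
        by_cases hx : P x
        · simp [hx, hE x hx]
        · simp only [hx, hQ x hx, if_false, Multiset.count_filter_of_pos, count_roots]
          split_ifs <;> simp
    _ = #(p.roots.toFinset.filter (· ∈ E)) + p.roots.countP Q := by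
        rw [Finset.sum_add_distrib, Finset.sum_boole, ← Nat.cast_sum,
          Multiset.sum_count_eq_card fun x hx => Multiset.mem_toFinset.mpr
            (Multiset.mem_of_mem_filter hx), Multiset.countP_eq_card_filter]
    _ ≤ #E + p.roots.countP Q := by
        gcongr
        exact fun x hx => (Finset.mem_filter.mp hx).2

section Moebius

variable {K : Type*} [Field K]

noncomputable def moebius (N : ℕ) (Q : K[X]) : K[X] :=
  ∑ k ∈ range (N + 1), C (Q.coeff k) * X ^ k * (1 + X) ^ (N - k)

theorem eval_moebius {N : ℕ} {Q : K[X]} (hQ : Q.natDegree ≤ N) {w : K} (hw : 1 + w ≠ 0) :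
    (moebius N Q).eval w = (1 + w) ^ N * Q.eval (w / (1 + w)) := by
  rw [eval_eq_sum_range' (Nat.lt_succ_of_le hQ), moebius, eval_finsetSum, Finset.mul_sum]
  refine Finset.sum_congr rfl fun k hk => ?_
  rw [← Nat.add_sub_cancel' (Nat.lt_succ_iff.mp (Finset.mem_range.mp hk))]
  simp only [eval_mul, eval_C, eval_pow, eval_X, eval_add, eval_one, Nat.add_sub_cancel_left,
    pow_add, div_pow]
  field_simp

theorem moebius_sum {ι : Type*} (N : ℕ) (s : Finset ι) (f : ι → K[X]) :
    moebius N (∑ i ∈ s, f i) = ∑ i ∈ s, moebius N (f i) := by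
  simp only [moebius, finsetSum_coeff, map_sum, Finset.sum_mul]
  exact Finset.sum_comm

theorem moebius_X_sub_C (r : K) : moebius 1 (X - C r) = C (1 - r) * X - C r := by
  simp only [moebius, sum_range_succ, sum_range_zero, coeff_sub, coeff_X_zero, coeff_X_one,
    coeff_C_zero, coeff_C_succ, map_sub, C_0, C_1]
  ring

variable [LinearOrder K] [IsStrictOrderedRing K]

theorem eq_of_eval_eq_of_pos {P Q : K[X]} (h : ∀ w, 0 < w → P.eval w = Q.eval w) : P = Q :=
  eq_of_infinite_eval_eq P Q ((Set.Ioi_infinite 0).mono fun w hw => h w hw)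

theorem moebius_mul {M N : ℕ} {P Q : K[X]} (hP : P.natDegree ≤ M) (hQ : Q.natDegree ≤ N) :
    moebius (M + N) (P * Q) = moebius M P * moebius N Q := by
  refine eq_of_eval_eq_of_pos fun w hw => ?_
  have hw' : 1 + w ≠ 0 := by positivity
  rw [eval_mul, eval_moebius hP hw', eval_moebius hQ hw',
    eval_moebius (natDegree_mul_le.trans (add_le_add hP hQ)) hw', eval_mul, pow_add]
  ring

theorem moebius_C_mul_X_pow_mul_X_sub_one_pow (c : K) {α β N : ℕ} (h : α + β ≤ N) :
    moebius N (C c * X ^ α * (X - 1) ^ β) = C (c * (-1) ^ β) * X ^ α * (1 + X) ^ (N - α - β) := by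
  have hdeg : (C c * X ^ α * (X - 1) ^ β : K[X]).natDegree ≤ N := le_trans (by compute_degree) h
  refine eq_of_eval_eq_of_pos fun w hw => ?_
  have hw' : 1 + w ≠ 0 := by positivity
  obtain ⟨m, rfl⟩ := Nat.exists_eq_add_of_le h
  rw [eval_moebius hdeg hw', show α + β + m - α - β = m by omega]
  simp only [eval_mul, eval_C, eval_pow, eval_X, eval_sub, eval_one, eval_add, pow_add]
  rw [show w / (1 + w) - 1 = -1 / (1 + w) by field_simp; ring, div_pow, div_pow]
  field_simp

theorem moebius_ne_zero {N : ℕ} {Q : K[X]} (hQ : Q.natDegree ≤ N) (h : Q ≠ 0) :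
    moebius N Q ≠ 0 := by
  refine fun h0 => h (eq_zero_of_infinite_isRoot Q ((Set.Ioo_infinite zero_lt_one).mono ?_))
  rintro u ⟨hu0, hu1⟩
  have h1u : 0 < 1 - u := sub_pos.mpr hu1
  have hw : 1 + u / (1 - u) ≠ 0 := by positivity
  have := eval_moebius hQ hw
  rw [h0, eval_zero, show u / (1 - u) / (1 + u / (1 - u)) = u by field_simp; ring] at this
  exact (mul_eq_zero.mp this.symm).resolve_left (pow_ne_zero _ hw)

theorem countP_roots_Ioo_le_moebius {N : ℕ} {Q : K[X]} (hQ0 : Q ≠ 0) (hQ : Q.natDegree ≤ N) :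
    Q.roots.countP (fun u => 0 < u ∧ u < 1) ≤ (moebius N Q).roots.countP (0 < ·) := by
  induction N generalizing Q with
  | zero =>
    rw [eq_C_of_natDegree_le_zero hQ, roots_C]
    simp
  | succ N ih => ?_
  by_cases hr : ∃ r ∈ Q.roots, 0 < r ∧ r < 1
  swap
  · push Not at hr
    rw [Multiset.countP_eq_zero.mpr fun r hr' h => not_lt.mpr (hr r hr' h.1) h.2]
    exact Nat.zero_le _
  obtain ⟨r, hroot, hr0, hr1⟩ := hr
  obtain ⟨H, rfl⟩ := dvd_iff_isRoot.mpr (isRoot_of_mem_roots hroot)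
  have hH0 : H ≠ 0 := right_ne_zero_of_mul hQ0
  have hH : H.natDegree ≤ N := by
    rw [natDegree_mul (X_sub_C_ne_zero r) hH0, natDegree_X_sub_C] at hQ
    omega
  have h1r : 1 - r ≠ 0 := sub_ne_zero.mpr hr1.ne'
  have hfactor : moebius (N + 1) ((X - C r) * H) = (C (1 - r) * X - C r) * moebius N H := by
    rw [add_comm, moebius_mul (natDegree_X_sub_C r).le hH, moebius_X_sub_C]
  have hroots : (moebius (N + 1) ((X - C r) * H)).roots =
      {(1 - r)⁻¹ * r} + (moebius N H).roots := by
    rw [hfactor, roots_mul (hfactor ▸ moebius_ne_zero hQ hQ0), roots_C_mul_X_sub_C r h1r]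
  rw [hroots, roots_mul hQ0, roots_X_sub_C, Multiset.countP_add, Multiset.countP_add]
  have hpos : 0 < (1 - r)⁻¹ * r := mul_pos (inv_pos.mpr (sub_pos.mpr hr1)) hr0
  simpa [Multiset.countP_eq_card_filter, Multiset.filter_singleton, hr0, hr1, hpos]
    using ih hH0 hH

end Moebius

section Intervals

variable {K : Type*} [Field K] [LinearOrder K] [IsStrictOrderedRing K] {ι : Type*}
  (s : Finset ι) (c : ι → K) (α β : ι → ℕ)

theorem countP_roots_neg_le :
    (∑ i ∈ s, C (c i) * X ^ α i * (X - 1) ^ β i).roots.countP (· < 0) ≤ 2 * #s - 2 := by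
  rw [countP_roots_comp_C_mul_X_add_C _ (isUnit_neg_one (α := K)) 0 (T := (0 < ·))
    fun w => by simp]
  convert countP_roots_pos_le s (fun i => c i * (-1) ^ (α i + β i)) α β using 3
  simp only [sum_comp]
  refine Finset.sum_congr rfl fun i _ => ?_
  simp only [mul_comp, pow_comp, C_comp, X_comp, sub_comp, one_comp, map_mul, map_pow, map_neg,
    map_one, C_0, add_zero, pow_add]
  rw [show (-1 * X - 1 : K[X]) = -1 * (1 + X) by ring]
  simp only [mul_pow]
  ring

theorem countP_roots_one_lt_le :
    (∑ i ∈ s, C (c i) * X ^ α i * (X - 1) ^ β i).roots.countP (1 < ·) ≤ 2 * #s - 2 := by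
  rw [countP_roots_comp_C_mul_X_add_C _ (isUnit_one (M := K)) 1 (T := (0 < ·))
    fun w => by simp]
  convert countP_roots_pos_le s c β α using 3
  simp only [sum_comp]
  refine Finset.sum_congr rfl fun i _ => ?_
  simp only [mul_comp, pow_comp, C_comp, X_comp, sub_comp, one_comp, map_one, one_mul]
  ring

theorem countP_roots_Ioo_le :
    (∑ i ∈ s, C (c i) * X ^ α i * (X - 1) ^ β i).roots.countP (fun x => 0 < x ∧ x < 1) ≤
      2 * #s - 2 := by
  set P := ∑ i ∈ s, C (c i) * X ^ α i * (X - 1) ^ β i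
  rcases eq_or_ne P 0 with hP | hP
  · simp [hP]
  set N := s.sup fun i => α i + β i
  have hN : ∀ i ∈ s, α i + β i ≤ N := fun i hi => Finset.le_sup (f := fun i => α i + β i) hi
  have hdeg : P.natDegree ≤ N :=
    natDegree_sum_le_of_forall_le _ _ fun i hi => le_trans (by compute_degree) (hN i hi)
  have hmoebius : moebius N P =
      ∑ i ∈ s, C (c i * (-1) ^ β i) * X ^ α i * (1 + X) ^ (N - α i - β i) := by
    rw [moebius_sum]
    exact Finset.sum_congr rfl fun i hi => moebius_C_mul_X_pow_mul_X_sub_one_pow _ (hN i hi)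
  refine (countP_roots_Ioo_le_moebius hP hdeg).trans ?_
  rw [hmoebius]
  exact countP_roots_pos_le _ _ _ _

theorem countP_roots_ne_zero_ne_one_le :
    (∑ i ∈ s, C (c i) * X ^ α i * (X - 1) ^ β i).roots.countP (fun x => x ≠ 0 ∧ x ≠ 1) ≤
      6 * #s - 6 := by
  have hsplit : ∀ x : K, x ≠ 0 ∧ x ≠ 1 → x < 0 ∨ (0 < x ∧ x < 1 ∨ 1 < x) := by
    rintro x ⟨h0, h1⟩
    rcases h0.lt_or_gt with h0 | h0
    · exact Or.inl h0
    · exact Or.inr ((lt_or_gt_of_ne h1).imp (⟨h0, ·⟩) id)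
  have := countP_roots_neg_le s c α β
  have := countP_roots_Ioo_le s c α β
  have := countP_roots_one_lt_le s c α β
  grw [Multiset.countP_le_countP_add_countP hsplit,
    Multiset.countP_le_countP_add_countP (q := fun x => 0 < x ∧ x < 1) (r := fun x => 1 < x)
      fun _ h => h]
  omega

theorem countP_roots_ne_zero_le :
    (∑ i ∈ s, C (c i) * X ^ α i).roots.countP (· ≠ 0) ≤ 4 * #s - 4 := by
  have hpos := countP_roots_pos_le s c α fun _ => 0
  have hneg := countP_roots_neg_le s c α fun _ => 0
  simp only [pow_zero, mul_one] at hpos hneg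
  grw [Multiset.countP_le_countP_add_countP (q := fun x => x < 0) (r := fun x => 0 < x)
    fun x hx => hx.lt_or_gt]
  omega

theorem countP_roots_line_le {a b : K} (ha : a ≠ 0) (hb : b ≠ 0) :
    (∑ i ∈ s, C (c i) * X ^ α i * (C a * X + C b) ^ β i).roots.countP
      (fun x => x ≠ 0 ∧ x ≠ -b / a) ≤ 6 * #s - 6 := by
  have hρ : -b / a ≠ 0 := div_ne_zero (neg_ne_zero.mpr hb) ha
  rw [countP_roots_comp_C_mul_X_add_C _ hρ.isUnit 0 (T := fun w => w ≠ 0 ∧ w ≠ 1)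
    fun w => by simp [hρ]]
  convert countP_roots_ne_zero_ne_one_le s (fun i => c i * (-b / a) ^ α i * (-b) ^ β i) α β
    using 3
  have hline : C a * (C (-b / a) * X) + C b = C (-b) * (X - 1) := by
    rw [← mul_assoc, ← C_mul, mul_div_cancel₀ _ ha, C_neg]
    ring
  simp only [sum_comp, mul_comp, pow_comp, C_comp, X_comp, add_comp, C_0, add_zero, hline]
  refine Finset.sum_congr rfl fun i _ => ?_
  simp only [mul_pow, map_mul, map_pow]
  ring

theorem countP_roots_line_le_of_mul_eq_zero {a b : K} (hab : a * b = 0) :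
    (∑ i ∈ s, C (c i) * X ^ α i * (C a * X + C b) ^ β i).roots.countP (· ≠ 0) ≤ 4 * #s - 4 := by
  rcases mul_eq_zero.mp hab with rfl | rfl
  · convert countP_roots_ne_zero_le s (fun i => c i * b ^ β i) α using 3
    refine Finset.sum_congr rfl fun i _ => ?_
    simp only [C_0, zero_mul, zero_add, map_mul, map_pow]
    ring
  · convert countP_roots_ne_zero_le s (fun i => c i * a ^ β i) (fun i => α i + β i) using 3
    refine Finset.sum_congr rfl fun i _ => ?_
    simp only [C_0, add_zero, map_mul, map_pow, mul_pow, pow_add]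
    ring

end Intervals

end Polynomial

theorem MvPolynomial.aeval_fin_two_eq_sum {R : Type*} [CommRing R] (f : MvPolynomial (Fin 2) R)
    (p q : R[X]) :
    aeval ![p, q] f = ∑ m ∈ f.support, Polynomial.C (f.coeff m) * p ^ m 0 * q ^ m 1 := by
  rw [aeval_def, eval₂_eq']
  simp [Fin.prod_univ_two, mul_assoc]

/-- **Main theorem.** A real bivariate polynomial with at most `t` nonzero terms,
restricted to the line `y = a·x + b`, either vanishes identically or has at most
`6t - 4` real roots, counted with multiplicity except that the possible roots
`0` and `-b/a` are each counted at most once. -/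
theorem roots_on_line_le (f : MvPolynomial (Fin 2) ℝ) (t : ℕ)
    (ht : f.support.card ≤ t) (a b : ℝ) :
    (MvPolynomial.aeval ![X, C a * X + C b] f : Polynomial ℝ) = 0 ∨
    (∑ r ∈ (MvPolynomial.aeval ![X, C a * X + C b] f : Polynomial ℝ).roots.toFinset,
        (if r = 0 ∨ (a ≠ 0 ∧ r = -b / a) then 1 else
          ((MvPolynomial.aeval ![X, C a * X + C b] f : Polynomial ℝ).rootMultiplicity r : ℤ)))
      ≤ 6 * t - 4 := by
  rw [MvPolynomial.aeval_fin_two_eq_sum]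
  set g := ∑ m ∈ f.support, C (f.coeff m) * X ^ m 0 * (C a * X + C b) ^ m 1
  rcases eq_or_ne g 0 with hg | hg
  · exact Or.inl hg
  right
  have hs : 0 < #f.support := Finset.card_pos.mpr (Finset.nonempty_of_sum_ne_zero hg)
  rcases eq_or_ne (a * b) 0 with hab | hab
  · grw [sum_ite_rootMultiplicity_le g _ (· ≠ 0) {0} (by grind) (by grind),
      countP_roots_line_le_of_mul_eq_zero _ _ _ _ hab, Finset.card_singleton]
    omega
  · obtain ⟨ha, hb⟩ := mul_ne_zero_iff.mp hab
    have hE : #({0, -b / a} : Finset ℝ) ≤ 2 := Finset.card_le_two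
    grw [sum_ite_rootMultiplicity_le g _ (fun x => x ≠ 0 ∧ x ≠ -b / a) {0, -b / a}
      (by grind) (by grind), countP_roots_line_le _ _ _ _ ha hb]
    omega
end

section
/- Let f ∈ ℝ[x,y] have at most t nonzero terms, and set g(x) = f(x, x+1). If g is not identically zero, then g has at most 2t-2 real roots in the open interval (-∞, -1), counted with multiplicity. -/
open Polynomial Multiset Set

/-- An alternating chain of coefficients of `p` of length `n+1` (i.e. `n` alternations). -/
def Alt (p : ℝ[X]) (n : ℕ) : Prop :=
  ∃ k : ℕ → ℕ, (∀ i < n, k i < k (i + 1)) ∧ (∀ i ≤ n, p.coeff (k i) ≠ 0) ∧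
    (∀ i < n, p.coeff (k i) * p.coeff (k (i + 1)) < 0)

lemma alt_mono {p : ℝ[X]} {n m : ℕ} (h : Alt p n) (hm : m ≤ n) : Alt p m := by
  obtain ⟨k, h1, h2, h3⟩ := h
  exact ⟨k, fun i hi => h1 i (lt_of_lt_of_le hi hm), fun i hi => h2 i (le_trans hi hm),
    fun i hi => h3 i (lt_of_lt_of_le hi hm)⟩

lemma chain_mono {k : ℕ → ℕ} {n : ℕ} (hk : ∀ i < n, k i < k (i + 1)) :
    ∀ i j, i < j → j ≤ n → k i < k j := by
  intro i j hij hjn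
  induction j with
  | zero => omega
  | succ j ih =>
    rcases Nat.lt_or_ge i j with h | h
    · exact lt_trans (ih h (by omega)) (hk j (by omega))
    · have : i = j := by omega
      subst this; exact hk i (by omega)

lemma alt_le_natDegree {p : ℝ[X]} {n : ℕ} (h : Alt p n) : n ≤ p.natDegree := by
  obtain ⟨k, h1, h2, _⟩ := h
  have h4 : ∀ i ≤ n, i ≤ k i := by
    intro i hi
    induction i with
    | zero => exact Nat.zero_le _
    | succ i ih => exact Nat.lt_of_le_of_lt (ih (by omega)) (h1 i (by omega))
  calc n ≤ k n := h4 n le_rfl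
  _ ≤ p.natDegree := le_natDegree_of_ne_zero (h2 n le_rfl)

lemma alt_zero_iff {p : ℝ[X]} : Alt p 0 ↔ p ≠ 0 := by
  constructor
  · rintro ⟨k, _, h2, _⟩ hp
    exact h2 0 le_rfl (by simp [hp])
  · intro hp
    exact ⟨fun _ => p.natDegree, by omega, fun i _ => by
      simpa using leadingCoeff_ne_zero.mpr hp, by omega⟩

open Classical in
/-- The maximal number of alternations in sign of the coefficients of `p`. -/
noncomputable def altV (p : ℝ[X]) : ℕ := Nat.findGreatest (Alt p) (p.natDegree + 1)

lemma le_altV {p : ℝ[X]} {n : ℕ} (h : Alt p n) : n ≤ altV p := by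
  classical
  exact Nat.le_findGreatest (by have := alt_le_natDegree h; omega) h

lemma alt_altV {p : ℝ[X]} (hp : p ≠ 0) : Alt p (altV p) := by
  classical
  exact Nat.findGreatest_spec (m := 0) (Nat.zero_le _) (alt_zero_iff.mpr hp)

lemma alt_def {p : ℝ[X]} {n : ℕ} : Alt p n ↔
  ∃ k : ℕ → ℕ, (∀ i < n, k i < k (i + 1)) ∧ (∀ i ≤ n, p.coeff (k i) ≠ 0) ∧
    (∀ i < n, p.coeff (k i) * p.coeff (k (i + 1)) < 0) := Iff.rfl

lemma alt_neg {p : ℝ[X]} {n : ℕ} (h : Alt p n) : Alt (-p) n := by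
  obtain ⟨k, h1, h2, h3⟩ := h
  refine ⟨k, h1, fun i hi => by simp [h2 i hi], fun i hi => ?_⟩
  have := h3 i hi
  simp only [coeff_neg]
  nlinarith

lemma alt_of_derivative {p : ℝ[X]} {n : ℕ} (h : Alt (derivative p) n) : Alt p n := by
  obtain ⟨k, h1, h2, h3⟩ := h
  have key : ∀ m : ℕ, (derivative p).coeff m = p.coeff (m + 1) * (m + 1 : ℝ) := by
    intro m; rw [coeff_derivative]
  refine ⟨fun i => k i + 1, ?_, ?_, ?_⟩
  · intro i hi
    show k i + 1 < k (i + 1) + 1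
    have := h1 i hi; omega
  · intro i hi
    show p.coeff (k i + 1) ≠ 0
    intro hc
    exact h2 i hi (by rw [key, hc, zero_mul])
  · intro i hi
    show p.coeff (k i + 1) * p.coeff (k (i + 1) + 1) < 0
    have hprod := h3 i hi
    rw [key, key] at hprod
    have p1 : (0:ℝ) < (k i + 1 : ℝ) := by positivity
    have p2 : (0:ℝ) < (k (i+1) + 1 : ℝ) := by positivity
    nlinarith [mul_pos p1 p2]

lemma alt_X_mul {q : ℝ[X]} {n : ℕ} (h : Alt q n) : Alt (X * q) n := by
  obtain ⟨k, h1, h2, h3⟩ := h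
  refine ⟨fun i => k i + 1, ?_, fun i hi => ?_, fun i hi => ?_⟩
  · intro i hi
    show k i + 1 < k (i + 1) + 1
    have := h1 i hi; omega
  · beta_reduce
    rw [coeff_X_mul]; exact h2 i hi
  · beta_reduce
    rw [coeff_X_mul, coeff_X_mul]; exact h3 i hi

lemma alt_of_X_mul {q : ℝ[X]} {n : ℕ} (h : Alt (X * q) n) : Alt q n := by
  obtain ⟨k, h1, h2, h3⟩ := h
  have hk0 : ∀ i ≤ n, k i ≠ 0 := by
    intro i hi hc
    apply h2 i hi
    rw [hc]
    simp
  have hco : ∀ i ≤ n, (X * q).coeff (k i) = q.coeff (k i - 1) := by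
    intro i hi
    obtain ⟨m, hm⟩ := Nat.exists_eq_succ_of_ne_zero (hk0 i hi)
    rw [hm, coeff_X_mul, Nat.succ_sub_one]
  refine ⟨fun i => k i - 1, ?_, fun i hi => ?_, fun i hi => ?_⟩
  · intro i hi
    show k i - 1 < k (i + 1) - 1
    have := h1 i hi
    have := hk0 i (by omega)
    have := hk0 (i+1) (by omega)
    omega
  · show q.coeff (k i - 1) ≠ 0
    rw [← hco i hi]; exact h2 i hi
  · show q.coeff (k i - 1) * q.coeff (k (i + 1) - 1) < 0
    rw [← hco i (by omega), ← hco (i+1) (by omega)]; exact h3 i (by omega)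

/-- Multiplication by `1 + X` is variation diminishing. -/
lemma alt_of_one_add_X_mul {q : ℝ[X]} {n : ℕ} (h : Alt ((1 + X) * q) n) : Alt q n := by
  obtain ⟨k, h1, h2, h3⟩ := h
  set r : ℝ[X] := (1 + X) * q with hr
  have hcoeff : ∀ m : ℕ, r.coeff m = q.coeff m + (X * q).coeff m := by
    intro m; rw [hr, add_mul, one_mul, coeff_add]
  have choice : ∀ i, i ≤ n → ∃ m, (k i - 1 ≤ m ∧ m ≤ k i) ∧
      0 < q.coeff m * r.coeff (k i) := by
    intro i hi
    have h2' := h2 i hi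
    rcases Nat.eq_zero_or_pos (k i) with h0 | hpos
    · refine ⟨0, by omega, ?_⟩
      have hz : r.coeff 0 = q.coeff 0 := by rw [hcoeff]; simp
      rw [h0] at h2' ⊢
      rw [hz] at h2' ⊢
      exact mul_self_pos.mpr h2'
    · obtain ⟨m, hm⟩ := Nat.exists_eq_succ_of_ne_zero (Nat.pos_iff_ne_zero.mp hpos)
      have hx : (X * q).coeff (k i) = q.coeff (k i - 1) := by
        rw [hm, coeff_X_mul, Nat.succ_sub_one]
      have hAB : r.coeff (k i) = q.coeff (k i) + q.coeff (k i - 1) := by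
        rw [hcoeff, hx]
      by_cases hA : 0 < q.coeff (k i) * r.coeff (k i)
      · exact ⟨k i, by omega, hA⟩
      · refine ⟨k i - 1, by omega, ?_⟩
        push_neg at hA
        have hsq : (0:ℝ) < r.coeff (k i) * r.coeff (k i) := mul_self_pos.mpr h2'
        have hkey : q.coeff (k i - 1) * r.coeff (k i)
            = r.coeff (k i) * r.coeff (k i) - q.coeff (k i) * r.coeff (k i) := by
          nth_rewrite 2 [hAB]
          ring
        rw [hkey]
        linarith
  choose! m hm1 hm2 using choice
  have hmono : ∀ i < n, m i < m (i + 1) := by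
    intro i hi
    have b1 := hm1 i (by omega)
    have b2 := hm1 (i+1) (by omega)
    have hk := h1 i hi
    rcases Nat.lt_or_ge (m i) (m (i+1)) with h | h
    · exact h
    · exfalso
      have heq : m i = m (i+1) := by omega
      have s1 := hm2 i (by omega)
      have s2 := hm2 (i+1) (by omega)
      rw [heq] at s1
      have hlt := h3 i hi
      nlinarith [mul_pos s1 s2, sq_nonneg (q.coeff (m (i+1)))]
  refine ⟨m, hmono, fun i hi => ?_, fun i hi => ?_⟩
  · have := hm2 i hi
    intro hc; rw [hc] at this; simp at this
  · have s1 := hm2 i (by omega)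
    have s2 := hm2 (i+1) (by omega)
    have hlt := h3 i hi
    nlinarith [mul_pos s1 s2]

lemma alt_of_one_add_X_pow_mul {q : ℝ[X]} {B n : ℕ} (h : Alt ((1 + X) ^ B * q) n) :
    Alt q n := by
  induction B generalizing q with
  | zero => simpa using h
  | succ B ih =>
    have he : (1 + X) ^ (B + 1) * q = (1 + X) ^ B * ((1 + X) * q) := by ring
    rw [he] at h
    exact alt_of_one_add_X_mul (ih h)

/-- Removing a spike costs at most two alternations. -/
lemma alt_spike {p : ℝ[X]} {c : ℝ} {s n : ℕ} (hn : 1 ≤ n)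
    (h : Alt (C c * X ^ s + p) n) : Alt p (n - 2) := by
  obtain ⟨k, h1, h2, h3⟩ := h
  set u : ℝ[X] := C c * X ^ s + p with hu
  have hpc : ∀ m : ℕ, m ≠ s → u.coeff m = p.coeff m := by
    intro m hm
    rw [hu, coeff_add, coeff_C_mul, coeff_X_pow, if_neg hm, mul_zero, zero_add]
  by_cases hex : ∃ i, i ≤ n ∧ k i = s
  · obtain ⟨i₀, hi₀n, hi₀⟩ := hex
    have huniq : ∀ i ≤ n, i ≠ i₀ → k i ≠ s := by
      intro i hi hne hc
      rcases Nat.lt_or_ge i i₀ with h | h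
      · have := chain_mono h1 i i₀ h hi₀n; omega
      · have := chain_mono h1 i₀ i (by omega) hi; omega
    rcases Nat.eq_zero_or_pos i₀ with h0 | hpos
    · -- drop the first element
      refine alt_mono (n := n - 1) ⟨fun i => k (i + 1), ?_, fun i hi => ?_, fun i hi => ?_⟩
        (by omega)
      · intro i hi
        show k (i + 1) < k (i + 2)
        exact h1 (i+1) (by omega)
      · show p.coeff (k (i + 1)) ≠ 0
        rw [← hpc _ (huniq (i+1) (by omega) (by omega))]
        exact h2 (i+1) (by omega)
      · show p.coeff (k (i + 1)) * p.coeff (k (i + 2)) < 0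
        rw [← hpc _ (huniq (i+1) (by omega) (by omega)),
            ← hpc _ (huniq (i+2) (by omega) (by omega))]
        exact h3 (i+1) (by omega)
    · -- skip positions i₀ and i₀ + 1
      have hidx : ∀ i, i ≤ n - 2 → (if i < i₀ then k i else k (i + 2)) ≠ s := by
        intro i hi
        split
        · exact huniq i (by omega) (by omega)
        · exact huniq (i+2) (by omega) (by omega)
      refine ⟨fun i => if i < i₀ then k i else k (i + 2), ?_, fun i hi => ?_, fun i hi => ?_⟩
      · intro i hi
        show (if i < i₀ then k i else k (i + 2)) < (if i + 1 < i₀ then k (i+1) else k (i + 3))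
        split <;> split
        · exact h1 i (by omega)
        · exact chain_mono h1 i (i + 3) (by omega) (by omega)
        · omega
        · exact h1 (i+2) (by omega)
      · show p.coeff (if i < i₀ then k i else k (i + 2)) ≠ 0
        rw [← hpc _ (hidx i hi)]
        split
        · exact h2 i (by omega)
        · exact h2 (i+2) (by omega)
      · show p.coeff (if i < i₀ then k i else k (i + 2))
            * p.coeff (if i + 1 < i₀ then k (i+1) else k (i + 3)) < 0
        rw [← hpc _ (hidx i (by omega)), ← hpc _ (hidx (i+1) (by omega))]
        by_cases hc1 : i + 1 < i₀
        · rw [if_pos (by omega), if_pos hc1]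
          exact h3 i (by omega)
        · by_cases hc2 : i < i₀
          · have hi₀' : i + 1 = i₀ := by omega
            rw [if_pos hc2, if_neg hc1]
            have e1 := h3 i (by omega)
            have e2 := h3 (i+1) (by omega)
            have e3 := h3 (i+2) (by omega)
            nlinarith
          · rw [if_neg hc2, if_neg hc1]
            exact h3 (i+2) (by omega)
  · push_neg at hex
    refine alt_mono (n := n) ⟨k, h1, fun i hi => ?_, fun i hi => ?_⟩ (by omega)
    · rw [← hpc _ (hex i hi)]; exact h2 i hi
    · rw [← hpc _ (hex i (by omega)), ← hpc _ (hex (i+1) (by omega))]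
      exact h3 i (by omega)

theorem key : ∀ (m : ℕ) (p : ℝ[X]), p ≠ 0 → ∀ (a : ℝ),
    Multiset.card (p.roots.filter (fun x => a < x)) = m →
    (m ≤ Multiset.card ((derivative p).roots.filter (fun x => a < x)) + 1) ∧
    (∀ z : ℝ, a < z → eval z (derivative p) = 0 → eval z p ≠ 0 →
      (∀ w ∈ p.roots, a < w → z < w) →
      m ≤ Multiset.card ((derivative p).roots.filter (fun x => a < x))) := by
  intro m
  induction m using Nat.strong_induction_on with
  | _ m IH =>
    intro p hp a hm
    rcases Nat.eq_zero_or_pos m with hm0 | hmpos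
    · subst hm0; exact ⟨Nat.zero_le _, fun _ _ _ _ _ => Nat.zero_le _⟩
    have hne : (p.roots.filter (fun x => a < x)).toFinset.Nonempty := by
      obtain ⟨x, hx⟩ := Multiset.card_pos_iff_exists_mem.mp (by omega : 0 < Multiset.card (p.roots.filter (fun x => a < x)))
      exact ⟨x, Multiset.mem_toFinset.mpr hx⟩
    set T := (p.roots.filter (fun x => a < x)).toFinset with hT
    set r := T.min' hne with hrdef
    have hrT : r ∈ T := T.min'_mem hne
    have hr : r ∈ p.roots ∧ a < r := by
      have := hrT
      rw [hT, Multiset.mem_toFinset, Multiset.mem_filter] at this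
      exact this
    have hrroot : p.IsRoot r := (mem_roots'.mp hr.1).2
    have hrmin : ∀ w ∈ p.roots, a < w → r ≤ w := by
      intro w hw haw
      exact T.min'_le w (by rw [hT, Multiset.mem_toFinset, Multiset.mem_filter]; exact ⟨hw, haw⟩)
    have hdeg : 0 < p.natDegree := by
      by_contra h
      push_neg at h
      obtain ⟨c, rfl⟩ := natDegree_eq_zero.mp (Nat.le_zero.mp h)
      rw [roots_C] at hm
      simp at hm
      omega
    have hp' : derivative p ≠ 0 := by
      intro h
      have := natDegree_eq_zero_of_derivative_eq_zero h
      omega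
    set μ := p.rootMultiplicity r with hμ
    have hμpos : 0 < μ := (rootMultiplicity_pos hp).mpr hrroot
    have hsplit : p.roots.filter (fun x => a < x)
        = p.roots.filter (fun x => r < x) + p.roots.filter (fun x => x = r) := by
      ext y
      simp only [Multiset.count_add, Multiset.count_filter]
      by_cases hy : y ∈ p.roots
      · by_cases hyr : y = r
        · rw [hyr]
          simp [hr.2, lt_irrefl]
        · by_cases hay : a < y
          · have hry : r < y := lt_of_le_of_ne (hrmin y hy hay) (Ne.symm hyr)
            rw [if_pos hay, if_pos hry, if_neg hyr]
            try simp
          · rw [if_neg hay, if_neg (fun h => hay (lt_trans hr.2 h)), if_neg hyr]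
            try simp
      · have hcy : Multiset.count y p.roots = 0 := Multiset.count_eq_zero.mpr hy
        rw [hcy]
        simp
    have hcnt : Multiset.card (p.roots.filter (fun x => x = r)) = μ := by
      have heq : p.roots.filter (fun x => x = r) = Multiset.replicate (Multiset.count r p.roots) r :=
        Multiset.filter_eq' p.roots r
      rw [heq, Multiset.card_replicate, count_roots]
    have hmm : m = Multiset.card (p.roots.filter (fun x => r < x)) + μ := by
      rw [← hm, hsplit, Multiset.card_add, hcnt]
    set m' := Multiset.card (p.roots.filter (fun x => r < x)) with hm'
    have hm'le : m' ≤ Multiset.card ((derivative p).roots.filter (fun x => r < x)) := by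
      rcases Nat.eq_zero_or_pos m' with h0 | hpos
      · omega
      · have hne2 : ∃ x, x ∈ p.roots.filter (fun x => r < x) :=
          Multiset.card_pos_iff_exists_mem.mp (by omega)
        have hne2' : (p.roots.filter (fun x => r < x)).toFinset.Nonempty := by
          obtain ⟨x, hx⟩ := hne2
          exact ⟨x, Multiset.mem_toFinset.mpr hx⟩
        set r₂ := ((p.roots.filter (fun x => r < x)).toFinset).min' hne2' with hr2def
        have hr2T : r₂ ∈ (p.roots.filter (fun x => r < x)).toFinset := Finset.min'_mem _ hne2'
        have hr2 : r₂ ∈ p.roots ∧ r < r₂ := by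
          have := hr2T
          rw [Multiset.mem_toFinset, Multiset.mem_filter] at this
          exact this
        have hr2root : p.IsRoot r₂ := (mem_roots'.mp hr2.1).2
        have hr2min : ∀ w ∈ p.roots, r < w → r₂ ≤ w := by
          intro w hw hrw
          exact Finset.min'_le _ w (by rw [Multiset.mem_toFinset, Multiset.mem_filter]; exact ⟨hw, hrw⟩)
        obtain ⟨z, hzmem, hz⟩ := exists_deriv_eq_zero hr2.2 p.continuousOn
          (by rw [hrroot.eq_zero, hr2root.eq_zero])
        rw [Polynomial.deriv] at hz
        have hzp : eval z p ≠ 0 := by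
          intro hzp
          have : r₂ ≤ z := hr2min z (mem_roots'.mpr ⟨hp, hzp⟩) hzmem.1
          exact absurd hzmem.2 (not_lt.mpr this)
        exact (IH m' (by omega) p hp r rfl).2 z hzmem.1 hz hzp
          (fun w hw hrw => lt_of_lt_of_le hzmem.2 (hr2min w hw hrw))
    have main : ∀ (extra : Multiset ℝ),
        (∀ y, Multiset.count y extra ≤
          Multiset.count y ((derivative p).roots.filter (fun x => a < x))) →
        Multiset.card extra ≤ Multiset.card ((derivative p).roots.filter (fun x => a < x)) :=
      fun extra h => Multiset.card_le_card (Multiset.le_iff_count.mpr h)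
    have hmult := p.rootMultiplicity_sub_one_le_derivative_rootMultiplicity r
    have hbase : ∀ y, Multiset.count y
          (Multiset.replicate (μ - 1) r + (derivative p).roots.filter (fun x => r < x))
        ≤ Multiset.count y ((derivative p).roots.filter (fun x => a < x)) := by
      intro y
      rw [Multiset.count_add, Multiset.count_replicate, Multiset.count_filter,
        Multiset.count_filter]
      by_cases hyr : y = r
      · rw [hyr]
        rw [if_pos rfl, if_neg (lt_irrefl r), if_pos hr.2, count_roots]
        omega
      · rw [if_neg (fun h : r = y => hyr h.symm)]
        by_cases hry : r < y
        · rw [if_pos hry, if_pos (lt_trans hr.2 hry)]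
          omega
        · rw [if_neg hry]
          simp
    constructor
    · have h1 := main _ hbase
      rw [Multiset.card_add, Multiset.card_replicate] at h1
      omega
    · intro z haz hz hzp hzmin
      have hzr : z < r := hzmin r hr.1 hr.2
      have h2 : ∀ y, Multiset.count y
            ({z} + (Multiset.replicate (μ - 1) r + (derivative p).roots.filter (fun x => r < x)))
          ≤ Multiset.count y ((derivative p).roots.filter (fun x => a < x)) := by
        intro y
        rw [Multiset.count_add]
        by_cases hyz : y = z
        · rw [hyz]
          have hz1 : Multiset.count z ({z} : Multiset ℝ) = 1 := by simp
          rw [hz1]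
          have hr1 : Multiset.count z
              (Multiset.replicate (μ - 1) r + (derivative p).roots.filter (fun x => r < x))
              = 0 := by
            rw [Multiset.count_add, Multiset.count_replicate,
              if_neg (ne_of_gt hzr),
              Multiset.count_filter, if_neg (not_lt.mpr (le_of_lt hzr))]
          rw [hr1, Multiset.count_filter, if_pos haz, count_roots]
          have : 0 < (derivative p).rootMultiplicity z := (rootMultiplicity_pos hp').mpr hz
          omega
        · have hz0 : Multiset.count y ({z} : Multiset ℝ) = 0 := by
            simp [hyz]
          rw [hz0, zero_add]
          exact hbase y
      have h3 := main _ h2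
      rw [Multiset.card_add, Multiset.card_add, Multiset.card_replicate] at h3
      simp only [Multiset.card_singleton] at h3
      omega

noncomputable def npos (p : ℝ[X]) : ℕ := Multiset.card (p.roots.filter (fun x => 0 < x))

/-- The crucial extra credit in the equal-sign case. -/
lemma caseB (p : ℝ[X]) (hp : p ≠ 0) (hp' : derivative p ≠ 0) (j : ℕ)
    (h0 : 0 < p.coeff 0) (hj : 0 < j) (hcj : 0 < p.coeff j)
    (hmin : ∀ i, 0 < i → i < j → p.coeff i = 0) :
    npos p ≤ npos (derivative p) := by
  rcases Nat.eq_zero_or_pos (npos p) with h | h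
  · omega
  · -- least positive root r
    have hne : ∃ x, x ∈ p.roots.filter (fun x => (0:ℝ) < x) :=
      Multiset.card_pos_iff_exists_mem.mp (by unfold npos at h; omega)
    have hne' : ((p.roots.filter (fun x => (0:ℝ) < x)).toFinset).Nonempty := by
      obtain ⟨x, hx⟩ := hne; exact ⟨x, Multiset.mem_toFinset.mpr hx⟩
    set r := ((p.roots.filter (fun x => (0:ℝ) < x)).toFinset).min' hne' with hrdef
    have hrT : r ∈ (p.roots.filter (fun x => (0:ℝ) < x)).toFinset := Finset.min'_mem _ hne'
    have hr : r ∈ p.roots ∧ 0 < r := by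
      have := hrT; rw [Multiset.mem_toFinset, Multiset.mem_filter] at this; exact this
    have hrroot : p.IsRoot r := (mem_roots'.mp hr.1).2
    have hrmin : ∀ w ∈ p.roots, 0 < w → r ≤ w := fun w hw h0w =>
      Finset.min'_le _ w (by rw [Multiset.mem_toFinset, Multiset.mem_filter]; exact ⟨hw, h0w⟩)
    -- p is positive on (0, r)
    have hsign : ∀ x, 0 < x → x < r → 0 < eval x p := by
      intro x hx hxr
      rcases lt_trichotomy (eval x p) 0 with hneg | hzero | hposx
      · exfalso
        have h0p : eval 0 p = p.coeff 0 := (coeff_zero_eq_eval_zero p).symm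
        have : (0:ℝ) ∈ Ioo (eval x p) (eval 0 p) := by
          constructor
          · exact hneg
          · rw [h0p]; exact h0
        obtain ⟨y, hy, hy0⟩ := intermediate_value_Ioo' (le_of_lt hx) p.continuousOn this
        have : r ≤ y := hrmin y (mem_roots'.mpr ⟨hp, hy0⟩) hy.1
        exact absurd (lt_trans hy.2 hxr) (not_lt.mpr this)
      · exfalso
        have : r ≤ x := hrmin x (mem_roots'.mpr ⟨hp, hzero⟩) hx
        exact absurd hxr (not_lt.mpr this)
      · exact hposx
    -- derivative is positive somewhere on (0, r)
    have hdvd : X ^ (j - 1) ∣ derivative p := by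
      rw [X_pow_dvd_iff]
      intro d hd
      rw [coeff_derivative, hmin (d+1) (by omega) (by omega), zero_mul]
    obtain ⟨q₁, hq₁⟩ := hdvd
    have hq₁0 : 0 < eval 0 q₁ := by
      have hc : q₁.coeff 0 = (derivative p).coeff (j - 1) := by
        rw [hq₁]
        have := coeff_X_pow_mul q₁ (j-1) 0
        rw [zero_add] at this
        rw [this]
      have hder : (derivative p).coeff (j-1) = p.coeff j * (j : ℝ) := by
        rw [coeff_derivative, show j - 1 + 1 = j from by omega]
        congr 1
        rw [Nat.cast_sub (by omega : 1 ≤ j)]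
        push_cast
        ring
      rw [← coeff_zero_eq_eval_zero, hc, hder]
      positivity
    have hopen : IsOpen {x : ℝ | 0 < eval x q₁} := isOpen_lt continuous_const q₁.continuous
    obtain ⟨ε, hε, hball⟩ := Metric.isOpen_iff.mp hopen 0 hq₁0
    set x₁ := min (ε / 2) (r / 2) with hx₁def
    have hx₁pos : 0 < x₁ := by
      apply lt_min <;> [linarith; linarith [hr.2]]
    have hx₁r : x₁ < r := lt_of_le_of_lt (min_le_right _ _) (by linarith [hr.2])
    have hx₁ball : x₁ ∈ Metric.ball (0:ℝ) ε := by
      rw [Metric.mem_ball, Real.dist_eq, sub_zero, abs_of_pos hx₁pos]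
      exact lt_of_le_of_lt (min_le_left _ _) (by linarith)
    have hq₁x₁ : 0 < eval x₁ q₁ := hball hx₁ball
    have hp'x₁ : 0 < eval x₁ (derivative p) := by
      rw [hq₁, eval_mul, eval_pow, eval_X]
      positivity
    -- MVT gives a point with negative derivative
    obtain ⟨ξ, hξ, hξval⟩ := exists_deriv_eq_slope (fun x => eval x p) hx₁r
      p.continuousOn (p.differentiable.differentiableOn)
    rw [Polynomial.deriv] at hξval
    have hslope : eval ξ (derivative p) < 0 := by
      rw [hξval, hrroot.eq_zero]
      have := hsign x₁ hx₁pos hx₁r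
      apply div_neg_of_neg_of_pos <;> linarith
    -- IVT for the derivative
    have h0mem : (0:ℝ) ∈ Ioo (eval ξ (derivative p)) (eval x₁ (derivative p)) :=
      ⟨hslope, hp'x₁⟩
    obtain ⟨z, hz, hz0⟩ := intermediate_value_Ioo' (le_of_lt hξ.1) (derivative p).continuousOn h0mem
    have hz1 : 0 < z := lt_trans hx₁pos hz.1
    have hz2 : z < r := lt_trans hz.2 hξ.2
    have hzp : eval z p ≠ 0 := ne_of_gt (hsign z hz1 hz2)
    exact (key (npos p) p hp 0 rfl).2 z hz1 hz0 hzp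
      (fun w hw h0w => lt_of_lt_of_le hz2 (hrmin w hw h0w))

theorem descartes : ∀ (d : ℕ) (p : ℝ[X]), p ≠ 0 → p.natDegree ≤ d → npos p ≤ altV p := by
  intro d
  induction d with
  | zero =>
    intro p hp hd
    obtain ⟨c, rfl⟩ := natDegree_eq_zero.mp (Nat.le_zero.mp hd)
    unfold npos
    rw [roots_C]
    simp
  | succ d IH =>
    intro p hp hd
    rcases Nat.eq_zero_or_pos p.natDegree with hdeg0 | hdegpos
    · obtain ⟨c, rfl⟩ := natDegree_eq_zero.mp hdeg0
      unfold npos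
      rw [roots_C]
      simp
    by_cases hc0 : p.coeff 0 = 0
    · -- p = X * divX p
      have hX : X * p.divX = p := by
        have := X_mul_divX_add p
        rw [hc0, C_0, add_zero] at this
        exact this
      have hq : p.divX ≠ 0 := by
        intro h; rw [← hX, h, mul_zero] at hp; exact hp rfl
      have hdq : p.divX.natDegree ≤ d := by
        have hnd : p.natDegree = p.divX.natDegree + 1 := by
          conv_lhs => rw [← hX]
          rw [natDegree_mul X_ne_zero hq, natDegree_X]
          omega
        omega
      have hroots : npos p = npos p.divX := by
        unfold npos
        conv_lhs => rw [← hX]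
        rw [roots_mul (by rw [hX]; exact hp), roots_X, Multiset.filter_add]
        simp [Multiset.filter_singleton]
      have halt : altV p.divX ≤ altV p := by
        have := alt_altV hq
        have := alt_X_mul this
        rw [hX] at this
        exact le_altV this
      calc npos p = npos p.divX := hroots
        _ ≤ altV p.divX := IH p.divX hq hdq
        _ ≤ altV p := halt
    · -- coeff 0 ≠ 0
      have hp' : derivative p ≠ 0 := by
        intro h
        have := natDegree_eq_zero_of_derivative_eq_zero h
        omega
      have hd' : (derivative p).natDegree ≤ d := by
        have := natDegree_derivative_lt (p := p) (by omega)
        omega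
      have hIH' : npos (derivative p) ≤ altV (derivative p) := IH _ hp' hd'
      have haltlift : altV (derivative p) ≤ altV p :=
        le_altV (alt_of_derivative (alt_altV hp'))
      -- the first nonzero coefficient above 0
      have hex : ∃ i, 0 < i ∧ p.coeff i ≠ 0 :=
        ⟨p.natDegree, hdegpos, leadingCoeff_ne_zero.mpr hp⟩
      classical
      have hspec : 0 < Nat.find hex ∧ p.coeff (Nat.find hex) ≠ 0 := Nat.find_spec hex
      set j := Nat.find hex with hjdef
      obtain ⟨hjpos, hcj⟩ := hspec
      have hmin : ∀ i, 0 < i → i < j → p.coeff i = 0 := by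
        intro i h1 h2
        have := Nat.find_min hex (show i < Nat.find hex from by omega)
        push_neg at this
        exact this h1
      rcases lt_trichotomy (p.coeff 0 * p.coeff j) 0 with hA | hZ | hB
      · -- opposite signs : V(p) ≥ V(p') + 1
        have hkey := (key (npos p) p hp 0 rfl).1
        have hchain : Alt p (altV (derivative p) + 1) := by
          obtain ⟨k, h1, h2, h3⟩ := alt_def.mp (alt_altV hp')
          set n := altV (derivative p) with hn
          have key2 : ∀ m : ℕ, (derivative p).coeff m = p.coeff (m + 1) * (m + 1 : ℝ) := by
            intro m; rw [coeff_derivative]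
          have hk2 : ∀ i ≤ n, p.coeff (k i + 1) ≠ 0 := by
            intro i hi hc
            exact h2 i hi (by rw [key2, hc, zero_mul])
          have hk3 : ∀ i < n, p.coeff (k i + 1) * p.coeff (k (i + 1) + 1) < 0 := by
            intro i hi
            have hprod := h3 i hi
            rw [key2, key2] at hprod
            have p1 : (0:ℝ) < (k i + 1 : ℝ) := by positivity
            have p2 : (0:ℝ) < (k (i+1) + 1 : ℝ) := by positivity
            nlinarith [mul_pos p1 p2]
          rcases lt_trichotomy (p.coeff 0 * p.coeff (k 0 + 1)) 0 with hS | hS | hS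
          · -- prepend index 0
            refine alt_def.mpr ⟨fun i => if i = 0 then 0 else k (i - 1) + 1, ?_, ?_, ?_⟩
            · intro i hi
              beta_reduce
              rcases Nat.eq_zero_or_pos i with rfl | hipos
              · simp
              · rw [if_neg (by omega), if_neg (by omega)]
                have : i - 1 < n := by omega
                have := h1 (i-1) this
                have : i + 1 - 1 = (i - 1) + 1 := by omega
                rw [this]
                omega
            · intro i hi
              beta_reduce
              rcases Nat.eq_zero_or_pos i with rfl | hipos
              · simpa using hc0
              · rw [if_neg (by omega)]
                exact hk2 (i-1) (by omega)
            · intro i hi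
              beta_reduce
              rcases Nat.eq_zero_or_pos i with rfl | hipos
              · simpa using hS
              · rw [if_neg (by omega), if_neg (by omega)]
                have heq : i + 1 - 1 = (i - 1) + 1 := by omega
                rw [heq]
                exact hk3 (i-1) (by omega)
          · exact absurd hS (by
              have := mul_ne_zero hc0 (hk2 0 (by omega))
              intro h; exact this h)
          · -- same sign as coeff 0 : insert both 0 and j
            have hjk : j < k 0 + 1 := by
              rcases Nat.lt_or_ge j (k 0 + 1) with h | h
              · exact h
              · exfalso
                have hjk0 : k 0 + 1 ≤ j := h
                have : p.coeff (k 0 + 1) ≠ 0 := hk2 0 (by omega)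
                have hge : j ≤ k 0 + 1 := Nat.find_min' hex ⟨by omega, this⟩
                have : j = k 0 + 1 := by omega
                rw [this] at hA
                nlinarith
            have hcjS : p.coeff j * p.coeff (k 0 + 1) < 0 := by
              rcases lt_or_gt_of_ne (show p.coeff 0 ≠ 0 from hc0) with hlt | hgt
              · have hcjpos : 0 < p.coeff j := by nlinarith
                have hckneg : p.coeff (k 0 + 1) < 0 := by nlinarith
                exact mul_neg_of_pos_of_neg hcjpos hckneg
              · have hcjneg : p.coeff j < 0 := by nlinarith
                have hckpos : 0 < p.coeff (k 0 + 1) := by nlinarith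
                exact mul_neg_of_neg_of_pos hcjneg hckpos
            refine alt_mono ((alt_def (n := n + 2)).mpr ⟨fun i => if i = 0 then 0 else if i = 1 then j
              else k (i - 2) + 1, ?_, ?_, ?_⟩) (by omega)
            · intro i hi
              beta_reduce
              rcases Nat.eq_zero_or_pos i with rfl | hipos
              · simpa using hjpos
              · rcases Nat.eq_or_lt_of_le hipos with h1' | higt
                · have hieq : i = 1 := by omega
                  subst hieq
                  rw [if_neg (by omega), if_pos rfl, if_neg (by omega), if_neg (by omega)]
                  simpa using hjk
                · rw [if_neg (by omega), if_neg (by omega), if_neg (by omega), if_neg (by omega)]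
                  have heq : i + 1 - 2 = (i - 2) + 1 := by omega
                  rw [heq]
                  have := h1 (i-2) (by omega)
                  omega
            · intro i hi
              beta_reduce
              rcases Nat.eq_zero_or_pos i with rfl | hipos
              · simpa using hc0
              · rcases Nat.eq_or_lt_of_le hipos with h1' | higt
                · have hieq : i = 1 := by omega
                  subst hieq
                  rw [if_neg (by omega), if_pos rfl]
                  exact hcj
                · rw [if_neg (by omega), if_neg (by omega)]
                  exact hk2 (i-2) (by omega)
            · intro i hi
              beta_reduce
              rcases Nat.eq_zero_or_pos i with rfl | hipos
              · simpa using hA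
              · rcases Nat.eq_or_lt_of_le hipos with h1' | higt
                · have hieq : i = 1 := by omega
                  subst hieq
                  rw [if_neg (by omega), if_pos rfl, if_neg (by omega), if_neg (by omega)]
                  simpa using hcjS
                · rw [if_neg (by omega), if_neg (by omega), if_neg (by omega), if_neg (by omega)]
                  have heq : i + 1 - 2 = (i - 2) + 1 := by omega
                  rw [heq]
                  exact hk3 (i-2) (by omega)
        calc npos p ≤ npos (derivative p) + 1 := hkey
          _ ≤ altV (derivative p) + 1 := by omega
          _ ≤ altV p := le_altV hchain
      · exact absurd hZ (mul_ne_zero hc0 hcj)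
      · -- same signs : use caseB (possibly for -p)
        have hnn : npos p ≤ npos (derivative p) := by
          rcases lt_trichotomy (p.coeff 0) 0 with hneg | hzero | hpos
          · have h1 : (0:ℝ) < (-p).coeff 0 := by rw [coeff_neg]; linarith
            have h2 : (0:ℝ) < (-p).coeff j := by
              rw [coeff_neg]
              nlinarith
            have h3 : ∀ i, 0 < i → i < j → (-p).coeff i = 0 := by
              intro i hi hij
              rw [coeff_neg, hmin i hi hij, neg_zero]
            have h4 : (-p : ℝ[X]) ≠ 0 := fun h => hp (by simpa using congrArg Neg.neg h)
            have h5 : derivative (-p) ≠ 0 := by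
              rw [map_neg]
              intro h
              exact hp' (by simpa using congrArg Neg.neg h)
            have := caseB (-p) h4 h5 j h1 hjpos h2 h3
            have e1 : npos (-p) = npos p := by
              unfold npos
              rw [roots_neg]
            have e2 : npos (derivative (-p)) = npos (derivative p) := by
              unfold npos
              rw [map_neg, roots_neg]
            rw [e1, e2] at this
            exact this
          · exact absurd hzero hc0
          · have hcjpos : 0 < p.coeff j := by nlinarith
            exact caseB p hp hp' j hpos hjpos hcjpos hmin
        calc npos p ≤ npos (derivative p) := hnn
          _ ≤ altV (derivative p) := hIH'
          _ ≤ altV p := haltlift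

lemma alt_ne_zero {p : ℝ[X]} {n : ℕ} (h : Alt p n) : p ≠ 0 := by
  obtain ⟨k, _, h2, _⟩ := alt_def.mp h
  intro hp
  exact h2 0 (Nat.zero_le _) (by rw [hp]; simp)

lemma term_coeff (c : ℝ) (a b k : ℕ) :
    (C c * X ^ a * (1 + X) ^ b).coeff k
      = c * (if a ≤ k then ((b.choose (k - a) : ℕ) : ℝ) else 0) := by
  have h1 : C c * X ^ a * (1 + X) ^ b = C c * (1 + X) ^ b * X ^ a := by ring
  rw [h1, coeff_mul_X_pow']
  by_cases h : a ≤ k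
  · rw [if_pos h, if_pos h, coeff_C_mul, coeff_one_add_X_pow]
  · rw [if_neg h, if_neg h, mul_zero]

/-- The core combinatorial bound: a sum of `t` terms `c·X^a(1+X)^b` admits at most
`2t-2` alternations of coefficient signs. -/
lemma core {ι : Type} : ∀ (N : ℕ) (S : Finset ι) (aa bb : ι → ℕ) (cc : ι → ℝ) (n : ℕ),
    S.card ≤ N →
    Alt (∑ i ∈ S, C (cc i) * X ^ (aa i) * (1 + X) ^ (bb i)) n →
    (n : ℤ) ≤ 2 * S.card - 2 := by
  classical
  intro N
  induction N with
  | zero =>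
    intro S aa bb cc n hcard halt
    rw [Finset.card_eq_zero.mp (Nat.le_zero.mp hcard)] at halt
    rw [Finset.sum_empty] at halt
    exact absurd rfl (alt_ne_zero halt)
  | succ N IH =>
    intro S aa bb cc n hcard halt
    rcases Nat.lt_or_ge S.card (N + 1) with hlt | hge
    · exact IH S aa bb cc n (by omega) halt
    have hcardeq : S.card = N + 1 := by omega
    have hS : S.Nonempty := Finset.card_pos.mp (by omega)
    rcases Nat.eq_zero_or_pos n with rfl | hn
    · have : 1 ≤ S.card := by omega
      push_cast
      omega
    rcases Nat.lt_or_ge S.card 2 with hc1 | hc2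
    · -- single term : no alternation possible
      exfalso
      have hcard1 : S.card = 1 := by omega
      obtain ⟨j, hj⟩ := Finset.card_eq_one.mp hcard1
      rw [hj, Finset.sum_singleton] at halt
      obtain ⟨k, h1, h2, h3⟩ := alt_def.mp halt
      have := h3 0 (by omega)
      rw [term_coeff, term_coeff] at this
      set A := (if aa j ≤ k 0 then (((bb j).choose (k 0 - aa j) : ℕ) : ℝ) else 0) with hA
      set B := (if aa j ≤ k 1 then (((bb j).choose (k 1 - aa j) : ℕ) : ℝ) else 0) with hB
      have hAnn : 0 ≤ A := by rw [hA]; split <;> positivity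
      have hBnn : 0 ≤ B := by rw [hB]; split <;> positivity
      have e : cc j * A * (cc j * B) = (cc j * cc j) * (A * B) := by ring
      rw [e] at this
      exact absurd this (not_lt.mpr (mul_nonneg (mul_self_nonneg _) (mul_nonneg hAnn hBnn)))
    · -- at least two terms : factor out (1+X)^B and remove a spike
      set B := S.inf' hS bb with hBdef
      obtain ⟨j, hjS, hjB⟩ := Finset.exists_mem_eq_inf' hS bb
      have hBle : ∀ i ∈ S, B ≤ bb i := fun i hi => Finset.inf'_le bb hi
      have hfact : (∑ i ∈ S, C (cc i) * X ^ (aa i) * (1 + X) ^ (bb i))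
          = (1 + X) ^ B * ∑ i ∈ S, C (cc i) * X ^ (aa i) * (1 + X) ^ (bb i - B) := by
        rw [Finset.mul_sum]
        refine Finset.sum_congr rfl fun i hi => ?_
        have h1 : B ≤ bb i := hBle i hi
        conv_lhs => rw [show bb i = (bb i - B) + B from by omega]
        rw [pow_add]
        ring
      rw [hfact] at halt
      have halt2 := alt_of_one_add_X_pow_mul halt
      have hsplit : (∑ i ∈ S, C (cc i) * X ^ (aa i) * (1 + X) ^ (bb i - B))
          = C (cc j) * X ^ (aa j)
            + ∑ i ∈ S.erase j, C (cc i) * X ^ (aa i) * (1 + X) ^ (bb i - B) := by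
        rw [← Finset.add_sum_erase _ _ hjS]
        congr 1
        rw [show bb j - B = 0 from by omega, pow_zero, mul_one]
      rw [hsplit] at halt2
      have halt3 := alt_spike hn halt2
      have hIH := IH (S.erase j) aa (fun i => bb i - B) cc (n - 2)
        (by rw [Finset.card_erase_of_mem hjS]; omega) halt3
      rw [Finset.card_erase_of_mem hjS] at hIH
      have h2le : 2 ≤ S.card := hc2
      omega

noncomputable def lin : ℝ[X] := -1 - X

lemma lin_comp_lin (q : ℝ[X]) : (q.comp lin).comp lin = q := by
  rw [Polynomial.comp_assoc]
  have h : lin.comp lin = X := by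
    unfold lin
    simp [sub_comp]
  rw [h, comp_X]

lemma comp_lin_ne_zero {q : ℝ[X]} (hq : q ≠ 0) : q.comp lin ≠ 0 := by
  intro h
  apply hq
  rw [← lin_comp_lin q, h, zero_comp]

lemma rm_comp_le (q : ℝ[X]) (hq : q ≠ 0) (y : ℝ) :
    rootMultiplicity (-1 - y) q ≤ rootMultiplicity y (q.comp lin) := by
  rw [le_rootMultiplicity_iff (comp_lin_ne_zero hq)]
  obtain ⟨s, hs⟩ := pow_rootMultiplicity_dvd q (-1 - y)
  have hcomp : q.comp lin = ((X - C (-1 - y)) ^ rootMultiplicity (-1 - y) q).comp lin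
      * s.comp lin := by
    rw [← mul_comp, ← hs]
  have hfact : (X - C (-1 - y)).comp lin = -(X - C y) := by
    unfold lin
    rw [sub_comp, X_comp, C_comp]
    rw [show ((-1 : ℝ) - y) = -(1 + y) from by ring]
    simp [C_neg, C_add]
    ring
  rw [hcomp, pow_comp, hfact]
  refine ⟨(-1 : ℝ[X]) ^ rootMultiplicity (-1 - y) q * s.comp lin, ?_⟩
  rw [neg_pow]
  ring

lemma rm_comp_eq (q : ℝ[X]) (hq : q ≠ 0) (y : ℝ) :
    rootMultiplicity y (q.comp lin) = rootMultiplicity (-1 - y) q := by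
  refine le_antisymm ?_ (rm_comp_le q hq y)
  have h := rm_comp_le (q.comp lin) (comp_lin_ne_zero hq) (-1 - y)
  rw [show (-1 - (-1 - y) : ℝ) = y from by ring, lin_comp_lin] at h
  exact h

lemma card_transfer (q : ℝ[X]) (hq : q ≠ 0) :
    Multiset.card ((q.comp lin).roots.filter (fun x => 0 < x))
      = Multiset.card (q.roots.filter (fun r => r < -1)) := by
  have hmap : (q.comp lin).roots.filter (fun x => 0 < x)
      = Multiset.map (fun r => -1 - r) (q.roots.filter (fun r => r < -1)) := by
    have hinj : Function.Injective (fun r : ℝ => -1 - r) := by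
      intro a b h
      simp only at h
      linarith
    ext y
    have hy : y = (fun r : ℝ => -1 - r) (-1 - y) := by simp
    rw [Multiset.count_filter]
    conv_rhs => rw [hy]
    rw [Multiset.count_map_eq_count' _ _ hinj]
    rw [Multiset.count_filter]
    by_cases h0 : 0 < y
    · rw [if_pos h0, if_pos (by linarith : (-1 - y : ℝ) < -1)]
      rw [count_roots, count_roots, rm_comp_eq q hq]
    · rw [if_neg h0, if_neg (by intro h; apply h0; linarith)]
  rw [hmap, Multiset.card_map]


/-- If `f` is a real bivariate polynomial with at most `t` nonzero terms and
`g(x) = f(x, x+1)` is not identically zero, then `g` has at most `2t - 2` real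
roots in `(-∞, -1)` counted with multiplicity. -/
theorem roots_lt_neg_one_le (f : MvPolynomial (Fin 2) ℝ) (t : ℕ)
    (ht : f.support.card ≤ t)
    (hg : (MvPolynomial.aeval ![X, X + 1] f : Polynomial ℝ) ≠ 0) :
    (((MvPolynomial.aeval ![X, X + 1] f : Polynomial ℝ).roots.filter
        (fun r => r < -1)).card : ℤ) ≤ 2 * t - 2 := by
  set g : ℝ[X] := MvPolynomial.aeval ![X, X + 1] f with hgdef
  -- expand g as a sum over the support
  have hsum : g = ∑ m ∈ f.support,
      C (MvPolynomial.coeff m f) * X ^ (m 0) * (X + 1) ^ (m 1) := by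
    rw [hgdef, MvPolynomial.aeval_def, MvPolynomial.eval₂_eq']
    refine Finset.sum_congr rfl fun m _ => ?_
    rw [Fin.prod_univ_two]
    simp only [Matrix.cons_val_zero, Matrix.cons_val_one, Matrix.head_cons]
    rw [Polynomial.algebraMap_eq]
    ring
  -- the reflected polynomial
  set h : ℝ[X] := g.comp lin with hhdef
  have hh : h = ∑ m ∈ f.support,
      C (MvPolynomial.coeff m f * (-1 : ℝ) ^ (m 0 + m 1)) * X ^ (m 1) * (1 + X) ^ (m 0) := by
    rw [hhdef, hsum, Polynomial.sum_comp]
    refine Finset.sum_congr rfl fun m _ => ?_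
    rw [mul_comp, mul_comp, pow_comp, pow_comp, C_comp, X_comp, add_comp, X_comp, one_comp]
    unfold lin
    rw [show ((-1 : ℝ[X]) - X) + 1 = -X from by ring]
    rw [show ((-1 : ℝ[X]) - X) = -(1 + X) from by ring]
    rw [neg_pow, neg_pow]
    rw [C_mul, C_pow, C_neg, C_1]
    rw [pow_add]
    ring
  have hhne : h ≠ 0 := comp_lin_ne_zero hg
  -- Descartes + core bound
  have hdesc : Multiset.card (h.roots.filter (fun x => 0 < x)) ≤ altV h :=
    descartes h.natDegree h hhne le_rfl
  have hcore : (altV h : ℤ) ≤ 2 * f.support.card - 2 := by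
    have halt : Alt (∑ m ∈ f.support,
        C (MvPolynomial.coeff m f * (-1 : ℝ) ^ (m 0 + m 1)) * X ^ (m 1) * (1 + X) ^ (m 0))
        (altV h) := by
      rw [← hh]
      exact alt_altV hhne
    exact core f.support.card f.support (fun m => m 1) (fun m => m 0)
      (fun m => MvPolynomial.coeff m f * (-1 : ℝ) ^ (m 0 + m 1)) (altV h) le_rfl halt
  have htrans := card_transfer g hg
  rw [← hhdef] at htrans
  rw [← htrans]
  have hle : (Multiset.card (h.roots.filter (fun x => 0 < x)) : ℤ) ≤ 2 * f.support.card - 2 :=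
    le_trans (by exact_mod_cast hdesc) hcore
  have : (f.support.card : ℤ) ≤ t := by exact_mod_cast ht
  omega
end

section
/- Descartes' rule of signs: let f ∈ ℝ[x] be a nonzero polynomial. Then the number of positive real roots of f, counted with multiplicity, is at most V(f), the number of sign changes in the ordered sequence of nonzero coefficients of f. -/
/-!
Mathlib proves the rule of signs for `Polynomial.signVariations`, which reads the coefficients
from the leading one down and counts the runs of equal signs among the nonzero ones. It remains
to identify that count with `signChanges`: counting adjacent pairs of opposite sign is
insensitive to reversing the list, and in a list of nonzero entries these pairs are exactly the
boundaries between consecutive runs of signs.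
-/

open Polynomial

theorem List.zip_dropLast_tail {α : Type*} (l : List α) :
    l.dropLast.zip l.tail = l.zip l.tail := by
  rw [zip_eq_zip_take_min (l₁ := l)]
  simp [dropLast_eq_take, take_of_length_le]

theorem List.countP_zip_tail_reverse {α : Type*} {p : α × α → Bool}
    (hp : ∀ a b, p (a, b) = p (b, a)) (l : List α) :
    (l.reverse.zip l.reverse.tail).countP p = (l.zip l.tail).countP p := by
  have hswap : p ∘ Prod.swap = p := funext fun ⟨a, b⟩ => hp b a
  rw [← zip_dropLast_tail, dropLast_reverse, tail_reverse, zip_eq_zipWith,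
    ← reverse_zipWith (by simp), countP_reverse, ← zip_eq_zipWith, ← zip_swap, countP_map, hswap,
    zip_dropLast_tail]

theorem List.length_destutter_ne_sub_one {α : Type*} [DecidableEq α] :
    ∀ l : List α,
      (l.destutter (· ≠ ·)).length - 1 = (l.zip l.tail).countP (fun p => p.1 ≠ p.2)
  | [] => rfl
  | [_] => rfl
  | a :: b :: t => by
    have ih := length_destutter_ne_sub_one (b :: t)
    have hpos := length_pos_of_ne_nil (destutter'_ne_nil (R := (· ≠ ·)) (a := b) (l := t))
    rw [destutter_cons', tail_cons] at ih
    rw [destutter_cons_cons, tail_cons, zip_cons_cons, countP_cons]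
    by_cases hab : a = b
    · subst hab
      simpa using ih
    · rw [if_pos hab, length_cons, ← ih, if_pos (by simpa using hab)]
      omega

theorem Polynomial.coeffList_filter_ne_zero {R : Type*} [Semiring R] [DecidableEq R] (f : R[X]) :
    f.coeffList.filter (· ≠ 0) = ((f.support.sort (· ≤ ·)).map f.coeff).reverse := by
  suffices h : (List.range f.degree.succ).filter (fun i => f.coeff i ≠ 0) =
      f.support.sort (· ≤ ·) by
    rw [coeffList, List.filter_map, List.filter_reverse, ← List.map_reverse, ← h]
    rfl
  refine List.SortedLT.eq_of_mem_iff ?_ (f.support.sortedLT_sort) fun i => ?_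
  · exact (List.pairwise_lt_range.filter _).sortedLT
  · rw [List.mem_filter, List.mem_range, Finset.mem_sort, mem_support_iff, decide_eq_true_iff,
      and_iff_right_iff_imp]
    intro hi
    rw [withBotSucc_degree_eq_natDegree_add_one (by rintro rfl; exact hi (coeff_zero i))]
    exact Nat.lt_succ_of_le (le_natDegree_of_ne_zero hi)

theorem mul_neg_iff_sign_ne {R : Type*} [Ring R] [LinearOrder R] [IsStrictOrderedRing R] {a b : R}
    (ha : a ≠ 0) (hb : b ≠ 0) : a * b < 0 ↔ SignType.sign a ≠ SignType.sign b := by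
  rw [← sign_eq_neg_one_iff, sign_mul]
  rcases ha.lt_or_gt with ha | ha <;> rcases hb.lt_or_gt with hb | hb <;> simp [ha, hb]

theorem List.countP_zip_tail_mul_neg_eq_length_destutter_sign {R : Type*} [Ring R]
    [LinearOrder R] [IsStrictOrderedRing R] {l : List R} (hl : ∀ x ∈ l, x ≠ 0) :
    (l.zip l.tail).countP (fun p => p.1 * p.2 < 0) =
      ((l.map SignType.sign).destutter (· ≠ ·)).length - 1 := by
  rw [length_destutter_ne_sub_one, ← map_tail, zip_map, countP_map]
  refine countP_congr fun p hp => ?_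
  obtain ⟨h₁, h₂⟩ := of_mem_zip hp
  simpa using mul_neg_iff_sign_ne (hl _ h₁) (hl _ (mem_of_mem_tail h₂))

theorem signChanges_eq_signVariations (f : ℝ[X]) : signChanges f = f.signVariations := by
  have hrev := List.countP_zip_tail_reverse (p := fun p : ℝ × ℝ => decide (p.1 * p.2 < 0))
    (fun a b => by rw [mul_comm]) ((f.support.sort (· ≤ ·)).map f.coeff)
  rw [signChanges, ← hrev, ← coeffList_filter_ne_zero,
    List.countP_zip_tail_mul_neg_eq_length_destutter_sign, signVariations, List.filter_map]
  · simp [Function.comp_def]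
  · simp

theorem descartes_rule_of_signs_general (f : Polynomial ℝ) :
    (f.roots.filter (fun r => 0 < r)).card ≤ signChanges f := by
  rw [← Multiset.countP_eq_card_filter, signChanges_eq_signVariations]
  exact roots_countP_pos_le_signVariations f

/-- **Descartes' rule of signs**: a nonzero real polynomial has at most
`signChanges f` positive real roots, counted with multiplicity. -/
theorem descartes_rule_of_signs (f : Polynomial ℝ) (hf : f ≠ 0) :
    (f.roots.filter (fun r => 0 < r)).card ≤ signChanges f :=
  descartes_rule_of_signs_general f
end

section
/- Let f ∈ ℝ[x,y] be a nonzero polynomial with at most t nonzero terms. Then there exists an odd integer n with 3 ≤ n ≤ 12t-5 such that f(x, x^n) is not the zero polynomial in ℝ[x]. -/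
/-!
If `f(x, x^n) = 0`, the monomial `x^a y^b` of `f` must cancel against another one
`x^a' y^b'` of `f` with `a + n b = a' + n b'`. A fixed pair of distinct exponents collides for
at most one `n`, so, fixing one monomial, at most `#supp f - 1 < t` values of `n` annihilate `f`;
already one of the `t` odd numbers `3, 5, …, 2t + 1` does not.
-/

open Polynomial

theorem Finsupp.eq_of_add_mul_eq_add_mul {m m' : Fin 2 →₀ ℕ} (hne : m ≠ m') {n n' : ℕ}
    (h : m 0 + n * m 1 = m' 0 + n * m' 1) (h' : m 0 + n' * m 1 = m' 0 + n' * m' 1) : n = n' := by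
  have h1 : m 1 ≠ m' 1 := fun h1 => hne <| by
    ext i
    fin_cases i
    · simp only [h1] at h; simpa using h
    · exact h1
  zify at h h' h1
  have key : ((n : ℤ) - n') * ((m 1 : ℤ) - m' 1) = 0 := by linear_combination h - h'
  exact_mod_cast sub_eq_zero.mp ((mul_eq_zero.mp key).resolve_right (sub_ne_zero.mpr h1))

namespace MvPolynomial

variable {R : Type*} [CommSemiring R]

theorem aeval_X_X_pow_eq_sum (f : MvPolynomial (Fin 2) R) (n : ℕ) :
    aeval ![Polynomial.X, Polynomial.X ^ n] f =
      ∑ m ∈ f.support, Polynomial.C (f.coeff m) * Polynomial.X ^ (m 0 + n * m 1) := by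
  conv_lhs => rw [f.as_sum]
  rw [map_sum]
  refine Finset.sum_congr rfl fun m _ => ?_
  rw [aeval_monomial, Finsupp.prod_pow, Fin.prod_univ_two, Polynomial.algebraMap_eq]
  simp [← pow_mul, ← pow_add]

theorem coeff_aeval_X_X_pow (f : MvPolynomial (Fin 2) R) (n e : ℕ) :
    (aeval ![Polynomial.X, Polynomial.X ^ n] f).coeff e =
      ∑ m ∈ f.support with m 0 + n * m 1 = e, f.coeff m := by
  rw [aeval_X_X_pow_eq_sum, finsetSum_coeff, Finset.sum_filter]
  refine Finset.sum_congr rfl fun m _ => ?_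
  rw [Polynomial.coeff_C_mul, Polynomial.coeff_X_pow]
  split_ifs <;> simp_all [eq_comm]

theorem exists_ne_exponent_eq_of_aeval_X_X_pow_eq_zero {f : MvPolynomial (Fin 2) R} {n : ℕ}
    (h : aeval ![(Polynomial.X : R[X]), Polynomial.X ^ n] f = 0) {m : Fin 2 →₀ ℕ}
    (hm : m ∈ f.support) : ∃ m' ∈ f.support, m' ≠ m ∧ m' 0 + n * m' 1 = m 0 + n * m 1 := by
  by_contra! hc
  have hsingle : {m' ∈ f.support | m' 0 + n * m' 1 = m 0 + n * m 1} = {m} := by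
    ext m'
    simp only [Finset.mem_filter, Finset.mem_singleton]
    exact ⟨fun ⟨hm', he⟩ => by_contra fun hne => hc m' hm' hne he, by rintro rfl; exact ⟨hm, rfl⟩⟩
  have hcoeff := coeff_aeval_X_X_pow f n (m 0 + n * m 1)
  rw [h, hsingle, Finset.sum_singleton, Polynomial.coeff_zero] at hcoeff
  exact mem_support_iff.mp hm hcoeff.symm

theorem card_lt_card_support_of_aeval_X_X_pow_eq_zero {f : MvPolynomial (Fin 2) R} (hf : f ≠ 0)
    {N : Finset ℕ} (hN : ∀ n ∈ N, aeval ![(Polynomial.X : R[X]), Polynomial.X ^ n] f = 0) :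
    N.card < f.support.card := by
  obtain ⟨m, hm⟩ := support_nonempty.mpr hf
  choose! partner hpartner using
    fun n hn => exists_ne_exponent_eq_of_aeval_X_X_pow_eq_zero (hN n hn) hm
  calc N.card ≤ (f.support.erase m).card := by
        refine Finset.card_le_card_of_injOn partner (fun n hn => ?_) fun n hn n' hn' heq => ?_
        · obtain ⟨hmem, hne, -⟩ := hpartner n hn
          exact Finset.mem_erase.mpr ⟨hne, hmem⟩
        · obtain ⟨-, hne, he⟩ := hpartner n hn
          obtain ⟨-, -, he'⟩ := hpartner n' hn'
          rw [heq] at hne he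
          exact Finsupp.eq_of_add_mul_eq_add_mul hne he he'
    _ < f.support.card := Finset.card_erase_lt_of_mem hm

end MvPolynomial

/-- If `f ∈ ℝ[x,y]` is nonzero with at most `t` nonzero terms, then there is an odd
integer `n` with `3 ≤ n ≤ 12t - 5` such that `f(x, x^n) ≠ 0`. -/
theorem exists_odd_subst_ne_zero (f : MvPolynomial (Fin 2) ℝ) (t : ℕ)
    (hf : f ≠ 0) (ht : f.support.card ≤ t) :
    ∃ n : ℕ, Odd n ∧ 3 ≤ n ∧ n ≤ 12 * t - 5 ∧
      (MvPolynomial.aeval ![X, X ^ n] f : Polynomial ℝ) ≠ 0 := by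
  by_contra! h
  let N := (Finset.range t).image fun k => 2 * k + 3
  have hN : N.card = t := by
    rw [Finset.card_image_of_injective _ fun a b hab => by omega, Finset.card_range]
  have hlt := MvPolynomial.card_lt_card_support_of_aeval_X_X_pow_eq_zero hf (N := N) <| by
    simp only [N, Finset.mem_image, Finset.mem_range]
    rintro _ ⟨k, hk, rfl⟩
    exact h _ ⟨k + 1, by ring⟩ (by omega) (by omega)
  omega
end
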